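/- arXiv:0803.0068 — 8 statements merged into one kernel-verified Lean document; each statement's English description precedes it below -/
import Mathlib

section
/- Let T be a perfect coloring of the hypercube H(n) with color set I = {1,…,k} and parameter matrix S = (s_{ij}). Then T is a perfect coloring of the distance-2 graph HH(n) on the same vertex set with parameter matrix (1/2)(S² − nE), where E is the k×k identity matrix; explicitly, for every word v of color i and every color j, twice the number of words of color j at Hamming distance exactly 2 from v equals (S²)_{ij} − n·δ_{ij}. -/
/-- Binary words of length `n`. -/
abbrev Word (n : ℕ) := Fin n → ZMod 2

namespace PC
variable {n : ℕ}
variable {n : ℕ}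

lemma zmod2_add_one_ne (a b : ZMod 2) : a + 1 ≠ b ↔ a = b := by revert a b; decide

def flip (v : Word n) (i : Fin n) : Word n := Function.update v i (v i + 1)

lemma flip_ne (v : Word n) (i j : Fin n) : flip v i j ≠ v j ↔ j = i := by
  unfold flip
  rcases eq_or_ne j i with h | h
  · subst h; simp [Function.update_self, zmod2_add_one_ne]
  · simp [Function.update_of_ne h, h]

lemma hammingDist_comm' (v w : Word n) : hammingDist v w = hammingDist w v := hammingDist_comm v w

lemma dist_one_iff (v u : Word n) : hammingDist v u = 1 ↔ ∃ i, u = flip v i := by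
  constructor
  · intro h
    rw [hammingDist, Finset.card_eq_one] at h
    obtain ⟨i, hi⟩ := h
    refine ⟨i, funext fun j => ?_⟩
    rcases eq_or_ne j i with rfl | hj
    · have : v j ≠ u j := by
        have : j ∈ ({j} : Finset (Fin n)) := Finset.mem_singleton_self j
        rw [← hi] at this; simpa using this
      have h2 : flip v j j ≠ v j := (flip_ne v j j).2 rfl
      -- u j ≠ v j and both ≠ v j in ZMod 2 → equal
      have : u j = v j + 1 := by
        have := this.symm
        revert this; generalize u j = a; generalize v j = b; revert a b; decide
      rw [this]; simp [flip, Function.update_self]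
    · have : j ∉ ({i} : Finset (Fin n)) := by simpa using hj
      rw [← hi] at this
      simp only [Finset.mem_filter, Finset.mem_univ, true_and, not_not] at this
      rw [← this]
      simp [flip, Function.update_of_ne hj]
  · rintro ⟨i, rfl⟩
    rw [hammingDist]
    have : ({j | v j ≠ flip v i j} : Finset (Fin n)) = {i} := by
      ext j; simp only [Finset.mem_filter, Finset.mem_univ, true_and, Finset.mem_singleton]
      rw [ne_comm.symm]; exact (flip_ne v i j)
    rw [this]; simp

lemma flip_injective (v : Word n) : Function.Injective (flip v) := by
  intro i i' h
  by_contra hne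
  have h1 : flip v i i ≠ v i := (flip_ne v i i).2 rfl
  have h2 : flip v i' i = v i := by
    have hne' : ¬ (i = i') := hne
    have := (flip_ne v i' i).not.mpr hne'
    simpa using this
  rw [h] at h1; exact h1 h2


lemma filt_flip (v w : Word n) (i : Fin n) :
    ({j | flip v i j ≠ w j} : Finset (Fin n))
      = if v i = w i then insert i ({j | v j ≠ w j} : Finset (Fin n))
        else ({j | v j ≠ w j} : Finset (Fin n)).erase i := by
  split_ifs with h
  · ext j
    simp only [Finset.mem_filter, Finset.mem_univ, true_and, Finset.mem_insert]
    rcases eq_or_ne j i with rfl | hj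
    · simp [flip, Function.update_self, zmod2_add_one_ne, h]
    · simp [flip, Function.update_of_ne hj, hj]
  · ext j
    simp only [Finset.mem_filter, Finset.mem_univ, true_and, Finset.mem_erase]
    rcases eq_or_ne j i with rfl | hj
    · simp [flip, Function.update_self, zmod2_add_one_ne, h]
    · simp [flip, Function.update_of_ne hj, hj]

lemma dist_flip (v w : Word n) (i : Fin n) :
    hammingDist (flip v i) w
      = if v i = w i then hammingDist v w + 1 else hammingDist v w - 1 := by
  rw [hammingDist, hammingDist, filt_flip]
  split_ifs with h
  · rw [Finset.card_insert_of_notMem (by simp [h])]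
  · rw [Finset.card_erase_of_mem (by simp [h])]

lemma mem_dist_pos (v w : Word n) (i : Fin n) (h : v i ≠ w i) : 1 ≤ hammingDist v w := by
  rw [hammingDist]
  exact Finset.card_pos.mpr ⟨i, by simp [h]⟩

lemma midpoints (v w : Word n) :
    ({u | hammingDist v u = 1 ∧ hammingDist u w = 1} : Finset (Word n)).card
      = if w = v then n else if hammingDist v w = 2 then 2 else 0 := by
  have himg : ({u | hammingDist v u = 1 ∧ hammingDist u w = 1} : Finset (Word n))
      = Finset.image (flip v) ({i | hammingDist (flip v i) w = 1} : Finset (Fin n)) := by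
    ext u
    simp only [Finset.mem_filter, Finset.mem_univ, true_and, Finset.mem_image]
    constructor
    · rintro ⟨h1, h2⟩
      obtain ⟨i, rfl⟩ := (dist_one_iff v u).mp h1
      exact ⟨i, h2, rfl⟩
    · rintro ⟨i, hi, rfl⟩
      exact ⟨(dist_one_iff v _).mpr ⟨i, rfl⟩, hi⟩
  rw [himg, Finset.card_image_of_injective _ (flip_injective v)]
  rcases eq_or_ne w v with rfl | hwv
  · have : ({i | hammingDist (flip w i) w = 1} : Finset (Fin n)) = Finset.univ := by
      ext i
      simp only [Finset.mem_filter, Finset.mem_univ, true_and, iff_true]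
      rw [dist_flip, hammingDist_self, if_pos rfl]
    rw [this, Finset.card_univ, Fintype.card_fin]; simp
  · rw [if_neg hwv]
    split_ifs with h2
    · have : ({i | hammingDist (flip v i) w = 1} : Finset (Fin n))
          = ({j | v j ≠ w j} : Finset (Fin n)) := by
        ext i
        simp only [Finset.mem_filter, Finset.mem_univ, true_and]
        rw [dist_flip, h2]
        rcases eq_or_ne (v i) (w i) with h | h
        · simp [h]
        · simp [h]
      rw [this, ← hammingDist, h2]
    · have : ({i | hammingDist (flip v i) w = 1} : Finset (Fin n)) = ∅ := by
        ext i
        simp only [Finset.mem_filter, Finset.mem_univ, true_and, Finset.notMem_empty, iff_false]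
        rw [dist_flip]
        rcases eq_or_ne (v i) (w i) with h | h
        · rw [if_pos h]
          intro hc
          have : hammingDist v w = 0 := by omega
          exact hwv (hammingDist_eq_zero.mp ((hammingDist_comm v w) ▸ this)).symm
        · rw [if_neg h]
          intro hc
          have := mem_dist_pos v w i h
          omega
      rw [this, Finset.card_empty]


open Finset in
lemma ncard_eq (P : Word n → Prop) [DecidablePred P] :
    {w | P w}.ncard = (Finset.univ.filter P).card := by
  rw [Set.ncard_eq_toFinset_card']
  congr 1
  ext w
  simp





end PC

open PC Finset in
/-- If `T` is a perfect coloring of the hypercube `H(n)` (adjacency: Hamming distance 1)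
with color set `Fin k` and parameter matrix `S`, then `T` is a perfect coloring of the
distance-2 graph `HH(n)` with parameter matrix `(1/2)(S² - nE)`: for every word `v` of color
`i = T v` and every color `j`, twice the number of words of color `j` at Hamming distance
exactly 2 from `v` equals `(S²)_{ij} - n·δ_{ij}`. -/
theorem perfect_coloring_distance_two
    {n k : ℕ} (T : Word n → Fin k) (hsurj : Function.Surjective T)
    (S : Matrix (Fin k) (Fin k) ℕ)
    (hperf : ∀ (v : Word n) (j : Fin k),
      {w | hammingDist v w = 1 ∧ T w = j}.ncard = S (T v) j) :
    ∀ (v : Word n) (j : Fin k),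
      (2 : ℤ) * ({w | hammingDist v w = 2 ∧ T w = j}.ncard : ℤ)
        = ((S * S) (T v) j : ℤ) - (n : ℤ) * (if T v = j then 1 else 0) := by
  classical
  intro v j
  have hperf' : ∀ (v : Word n) (l : Fin k),
      (univ.filter (fun w => hammingDist v w = 1 ∧ T w = l)).card = S (T v) l := by
    intro v l; rw [← ncard_eq]; exact hperf v l
  set A : Finset (Word n) := univ.filter (fun u => hammingDist v u = 1) with hA
  -- double sum
  set F : Word n → Word n → ℕ := fun u w =>
    if hammingDist v u = 1 ∧ hammingDist u w = 1 ∧ T w = j then 1 else 0 with hF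
  have h1 : (S * S) (T v) j = ∑ u : Word n, ∑ w : Word n, F u w := by
    rw [Matrix.mul_apply]
    have e1 : ∀ l, S (T v) l * S l j = ∑ u ∈ A.filter (fun u => T u = l), S (T u) j := by
      intro l
      have hc : (A.filter (fun u => T u = l)).card = S (T v) l := by
        rw [hA, filter_filter]; exact hperf' v l
      rw [Finset.sum_congr rfl (fun u hu => by
        rw [(mem_filter.mp hu).2]), Finset.sum_const, hc, smul_eq_mul]
    rw [Finset.sum_congr rfl (fun l _ => e1 l), Finset.sum_fiberwise A T (fun u => S (T u) j)]
    rw [Finset.sum_congr rfl (fun u _ => (hperf' u j).symm)]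
    rw [Finset.sum_congr rfl (fun u _ => Finset.card_filter _ _)]
    rw [hA, Finset.sum_filter]
    refine Finset.sum_congr rfl (fun u _ => ?_)
    split_ifs with h
    · exact Finset.sum_congr rfl (fun w _ => by simp [hF, h])
    · symm; exact Finset.sum_eq_zero (fun w _ => by simp [hF, h])
  have h2 : (∑ u : Word n, ∑ w : Word n, F u w)
      = (if T v = j then n else 0)
        + 2 * (univ.filter (fun w => hammingDist v w = 2 ∧ T w = j)).card := by
    rw [Finset.sum_comm]
    have e2 : ∀ w : Word n, (∑ u : Word n, F u w)
        = if T w = j then ((if w = v then n else 0)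
            + 2 * (if hammingDist v w = 2 then 1 else 0)) else 0 := by
      intro w
      rcases eq_or_ne (T w) j with h | h
      · have hsum : (∑ u : Word n, F u w)
            = (univ.filter (fun u => hammingDist v u = 1 ∧ hammingDist u w = 1)).card := by
          rw [Finset.card_filter]
          exact Finset.sum_congr rfl (fun u _ => by simp [hF, h])
        rw [hsum, midpoints, if_pos h]
        rcases eq_or_ne w v with rfl | hwv
        · simp [hammingDist_self]
        · rw [if_neg hwv, if_neg hwv]
          split_ifs <;> simp
      · rw [if_neg h]
        exact Finset.sum_eq_zero (fun u _ => by simp [hF, h])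
    rw [Finset.sum_congr rfl (fun w _ => e2 w), ← Finset.sum_filter]
    rw [Finset.sum_add_distrib]
    congr 1
    · rw [Finset.sum_ite_eq' (univ.filter (fun w => T w = j)) v (fun _ => n)]
      simp
    · rw [← Finset.mul_sum]
      congr 1
      rw [Finset.card_filter, Finset.sum_filter]
      exact Finset.sum_congr rfl (fun w _ => by
        by_cases h1 : T w = j <;> by_cases h2 : hammingDist v w = 2 <;> simp [h1, h2])
  have key : (S * S) (T v) j
      = (if T v = j then n else 0)
        + 2 * (univ.filter (fun w => hammingDist v w = 2 ∧ T w = j)).card := h1.trans h2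
  rw [ncard_eq]
  split_ifs at key ⊢ with h <;> push_cast [key] <;> ring
end

section
/- Let G be a simple regular graph of degree s, and let C₁ and C₂ be disjoint subsets of V(G) with C₁ ∪ C₂ ≠ V(G). Suppose χ_{C₁} is a perfect 2-coloring of G with parameters ((λ+i, s−λ−i)(i, s−i)) and χ_{C₂} is a perfect 2-coloring of G with parameters ((λ+j, s−λ−j)(j, s−j)). Then χ_{C₁ ∪ C₂} is a perfect 2-coloring of G with parameters ((λ+i+j, s−λ−i−j)(i+j, s−i−j)). -/
/-- `χ_C` is a perfect 2-coloring of the simple graph `G` with parameters `((a,b)(c,d))`: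
both colors occur, every vertex of `C` has exactly `a` neighbors in `C` and `b` neighbors
outside `C`, and every vertex outside `C` has exactly `c` neighbors in `C` and `d` neighbors
outside `C`. -/
def IsGraphPerfect2Coloring {V : Type*} (G : SimpleGraph V) (C : Set V)
    (a b c d : ℤ) : Prop :=
  C.Nonempty ∧ Cᶜ.Nonempty ∧
  (∀ v ∈ C,
    ({w | G.Adj v w ∧ w ∈ C}.ncard : ℤ) = a ∧
    ({w | G.Adj v w ∧ w ∉ C}.ncard : ℤ) = b) ∧
  (∀ v ∉ C,
    ({w | G.Adj v w ∧ w ∈ C}.ncard : ℤ) = c ∧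
    ({w | G.Adj v w ∧ w ∉ C}.ncard : ℤ) = d)

namespace SimpleGraph

variable {V : Type*} (G : SimpleGraph V)

theorem ncard_adj_mem_add_ncard_adj_notMem {v : V} (hv : (G.neighborSet v).Finite) (C : Set V) :
    {w | G.Adj v w ∧ w ∈ C}.ncard + {w | G.Adj v w ∧ w ∉ C}.ncard =
      (G.neighborSet v).ncard :=
  Set.ncard_inter_add_ncard_sdiff_eq_ncard _ C hv

theorem ncard_adj_mem_union {v : V} (hv : (G.neighborSet v).Finite) {C₁ C₂ : Set V}
    (hdisj : Disjoint C₁ C₂) :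
    {w | G.Adj v w ∧ w ∈ C₁ ∪ C₂}.ncard =
      {w | G.Adj v w ∧ w ∈ C₁}.ncard + {w | G.Adj v w ∧ w ∈ C₂}.ncard :=
  calc (G.neighborSet v ∩ (C₁ ∪ C₂)).ncard
      _ = (G.neighborSet v ∩ C₁ ∪ G.neighborSet v ∩ C₂).ncard := by
        rw [Set.inter_union_distrib_left]
      _ = (G.neighborSet v ∩ C₁).ncard + (G.neighborSet v ∩ C₂).ncard :=
        Set.ncard_union_eq (hdisj.mono Set.inter_subset_right Set.inter_subset_right)
          (hv.inter_of_left C₁) (hv.inter_of_left C₂)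

theorem isGraphPerfect2Coloring_of_regular {s : ℕ} (hfin : ∀ v, (G.neighborSet v).Finite)
    (hreg : ∀ v, (G.neighborSet v).ncard = s) {C : Set V} (hC : C.Nonempty) (hCc : Cᶜ.Nonempty)
    {a b c d : ℤ} (hab : a + b = s) (hcd : c + d = s)
    (hin : ∀ v ∈ C, ({w | G.Adj v w ∧ w ∈ C}.ncard : ℤ) = a)
    (hout : ∀ v ∉ C, ({w | G.Adj v w ∧ w ∈ C}.ncard : ℤ) = c) :
    IsGraphPerfect2Coloring G C a b c d := by
  have hsplit (v : V) :
      ({w | G.Adj v w ∧ w ∈ C}.ncard : ℤ) + {w | G.Adj v w ∧ w ∉ C}.ncard = s := by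
    exact_mod_cast (G.ncard_adj_mem_add_ncard_adj_notMem (hfin v) C).trans (hreg v)
  refine ⟨hC, hCc, fun v hv => ⟨hin v hv, ?_⟩, fun v hv => ⟨hout v hv, ?_⟩⟩
  · linarith [hsplit v, hin v hv]
  · linarith [hsplit v, hout v hv]

end SimpleGraph

theorem union_of_two_perfect_colorings
    {V : Type*} (G : SimpleGraph V) (s : ℕ)
    (hfin : ∀ v, (G.neighborSet v).Finite)
    (hreg : ∀ v, (G.neighborSet v).ncard = s)
    (C₁ C₂ : Set V) (hdisj : Disjoint C₁ C₂) (hne : C₁ ∪ C₂ ≠ Set.univ)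
    (lam i j : ℤ)
    (h1 : IsGraphPerfect2Coloring G C₁ (lam + i) (s - lam - i) i (s - i))
    (h2 : IsGraphPerfect2Coloring G C₂ (lam + j) (s - lam - j) j (s - j)) :
    IsGraphPerfect2Coloring G (C₁ ∪ C₂)
      (lam + i + j) (s - lam - i - j) (i + j) (s - i - j) := by
  obtain ⟨hC₁, -, hin₁, hout₁⟩ := h1
  obtain ⟨-, -, hin₂, hout₂⟩ := h2
  have hcount (v : V) : ({w | G.Adj v w ∧ w ∈ C₁ ∪ C₂}.ncard : ℤ) =
      {w | G.Adj v w ∧ w ∈ C₁}.ncard + {w | G.Adj v w ∧ w ∈ C₂}.ncard := by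
    exact_mod_cast G.ncard_adj_mem_union (hfin v) hdisj
  refine G.isGraphPerfect2Coloring_of_regular hfin hreg (hC₁.mono Set.subset_union_left)
    (Set.nonempty_compl.mpr hne) (by ring) (by ring) ?_ ?_
  · rintro v (hv | hv)
    · have hv₂ : v ∉ C₂ := hdisj.notMem_of_mem_left hv
      rw [hcount, (hin₁ v hv).1, (hout₂ v hv₂).1]
    · have hv₁ : v ∉ C₁ := hdisj.notMem_of_mem_right hv
      rw [hcount, (hout₁ v hv₁).1, (hin₂ v hv).1]
      ring
  · intro v hv
    rw [Set.mem_union, not_or] at hv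
    rw [hcount, (hout₁ v hv.1).1, (hout₂ v hv.2).1]
end

section
/- Let G be a simple regular graph of degree s and let C₁, …, C_m be pairwise disjoint subsets of V(G) whose union U is nonempty and not all of V(G). Suppose for each k the characteristic function χ_{C_k} is a perfect 2-coloring of G with parameters ((λ+c_k, s−λ−c_k)(c_k, s−c_k)), all with the same λ. Then χ_U is a perfect 2-coloring of G with parameters ((λ+c, s−λ−c)(c, s−c)), where c = c₁ + ⋯ + c_m. -/
theorem union_of_perfect_colorings
    {V : Type*} (G : SimpleGraph V) (s : ℕ)
    (hfin : ∀ v, (G.neighborSet v).Finite)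
    (hreg : ∀ v, (G.neighborSet v).ncard = s)
    (m : ℕ) (C : Fin m → Set V)
    (hdisj : ∀ k k', k ≠ k' → Disjoint (C k) (C k'))
    (hUne : (⋃ k, C k).Nonempty) (hUuniv : (⋃ k, C k) ≠ Set.univ)
    (lam : ℤ) (c : Fin m → ℤ)
    (h : ∀ k, IsGraphPerfect2Coloring G (C k)
      (lam + c k) (s - lam - c k) (c k) (s - c k)) :
    IsGraphPerfect2Coloring G (⋃ k, C k)
      (lam + ∑ k, c k) (s - lam - ∑ k, c k) (∑ k, c k) (s - ∑ k, c k) := by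
  classical
  have hf : ∀ (v : V) (S : Set V), {w | G.Adj v w ∧ w ∈ S}.Finite :=
    fun v S => (hfin v).subset (fun w hw => hw.1)
  -- complement count
  have hcompl : ∀ (v : V) (S : Set V),
      ({w | G.Adj v w ∧ w ∉ S}.ncard : ℤ) = (s : ℤ) - {w | G.Adj v w ∧ w ∈ S}.ncard := by
    intro v S
    have hun : {w | G.Adj v w ∧ w ∈ S} ∪ {w | G.Adj v w ∧ w ∉ S} = G.neighborSet v := by
      ext w; by_cases hw : w ∈ S <;> simp [SimpleGraph.mem_neighborSet, hw]
    have hd : Disjoint {w | G.Adj v w ∧ w ∈ S} {w | G.Adj v w ∧ w ∉ S} := by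
      rw [Set.disjoint_left]; rintro w ⟨_, hw⟩ ⟨_, hw'⟩; exact hw' hw
    have := Set.ncard_union_eq hd (hf v S) (hf v Sᶜ)
    rw [hun, hreg v] at this
    have : (s : ℤ) = {w | G.Adj v w ∧ w ∈ S}.ncard + {w | G.Adj v w ∧ w ∉ S}.ncard := by
      exact_mod_cast congrArg (Nat.cast : ℕ → ℤ) this
    linarith
  -- sum count
  have key : ∀ (v : V),
      ({w | G.Adj v w ∧ w ∈ ⋃ k, C k}.ncard : ℤ)
        = ∑ k, ({w | G.Adj v w ∧ w ∈ C k}.ncard : ℤ) := by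
    intro v
    set Fk : Fin m → Finset V := fun k => (hf v (C k)).toFinset with hFk
    have hset : {w | G.Adj v w ∧ w ∈ ⋃ k, C k} = ↑(Finset.univ.biUnion Fk) := by
      ext w
      simp only [Finset.coe_biUnion, Finset.mem_coe, Finset.mem_univ, Set.mem_iUnion,
        Set.iUnion_true, hFk, Set.Finite.coe_toFinset, Set.mem_setOf_eq, Set.mem_iUnion]
      constructor
      · rintro ⟨ha, k, hk⟩; exact ⟨k, ha, hk⟩
      · rintro ⟨k, ha, hk⟩; exact ⟨ha, k, hk⟩
    have hd : ∀ k ∈ Finset.univ, ∀ k' ∈ Finset.univ, k ≠ k' → Disjoint (Fk k) (Fk k') := by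
      intro k _ k' _ hkk'
      rw [Finset.disjoint_left]
      intro w hw hw'
      simp only [hFk, Set.Finite.mem_toFinset, Set.mem_setOf_eq] at hw hw'
      exact (hdisj k k' hkk').le_bot ⟨hw.2, hw'.2⟩
    rw [hset, Set.ncard_coe_finset, Finset.card_biUnion hd]
    push_cast
    refine Finset.sum_congr rfl fun k _ => ?_
    exact congrArg _ (Set.ncard_eq_toFinset_card _ (hf v (C k))).symm
  refine ⟨hUne, Set.nonempty_compl.mpr hUuniv, ?_, ?_⟩
  · intro v hv
    obtain ⟨k₀, hk₀⟩ := Set.mem_iUnion.mp hv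
    have hin : ({w | G.Adj v w ∧ w ∈ ⋃ k, C k}.ncard : ℤ) = lam + ∑ k, c k := by
      rw [key v]
      have hterm : ∀ k, ({w | G.Adj v w ∧ w ∈ C k}.ncard : ℤ)
          = (if k = k₀ then lam else 0) + c k := by
        intro k
        by_cases hk : k = k₀
        · subst hk; simpa using ((h k).2.2.1 v hk₀).1
        · have hvk : v ∉ C k := fun hvk =>
            (hdisj k k₀ hk).le_bot ⟨hvk, hk₀⟩
          rw [if_neg hk, zero_add]
          exact ((h k).2.2.2 v hvk).1
      rw [Finset.sum_congr rfl fun k _ => hterm k, Finset.sum_add_distrib]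
      simp
    exact ⟨hin, by rw [hcompl v, hin]; ring⟩
  · intro v hv
    have hin : ({w | G.Adj v w ∧ w ∈ ⋃ k, C k}.ncard : ℤ) = ∑ k, c k := by
      rw [key v]
      refine Finset.sum_congr rfl fun k _ => ?_
      have hvk : v ∉ C k := fun hvk => hv (Set.mem_iUnion.mpr ⟨k, hvk⟩)
      exact ((h k).2.2.2 v hvk).1
    exact ⟨hin, by rw [hcompl v, hin]⟩
end

section
/- Let F ⊆ F_2^24 be a set of 2^12 binary words of length 24, all of even Hamming weight, with pairwise Hamming distances at least 8, and such that every word of F_2^24 is at Hamming distance at most 4 from F (an extended binary Golay code). Then the distance coloring T, assigning to each word its Hamming distance to F (a value in {0,1,2,3,4}), is a perfect coloring of the hypercube H(24) with parameter matrix (rows and columns indexed by colors 0,…,4): row 0 = (0,24,0,0,0), row 1 = (1,0,23,0,0), row 2 = (0,2,0,22,0), row 3 = (0,0,3,0,21), row 4 = (0,0,0,24,0). -/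
/-- The Hamming distance from a word `v` to a code `F ⊆ F_2^n`. -/
noncomputable def distTo {n : ℕ} (F : Set (Word n)) (v : Word n) : ℕ :=
  sInf (hammingDist v '' F)

/-- The parameter matrix of the distance coloring of the Golay code in `H(24)`. -/
def golayMatrixH : Matrix (Fin 5) (Fin 5) ℕ :=
  !![0, 24,  0,  0,  0;
     1,  0, 23,  0,  0;
     0,  2,  0, 22,  0;
     0,  0,  3,  0, 21;
     0,  0,  0, 24,  0]

namespace GolayAux

open Finset

lemma zmod2_succ_ne (a : ZMod 2) : a + 1 ≠ a := by revert a; decide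

lemma zmod2_of_ne : ∀ a b : ZMod 2, a ≠ b → b = a + 1 := by decide

def flip {n : ℕ} (v : Word n) (i : Fin n) : Word n := Function.update v i (v i + 1)

lemma flip_self {n : ℕ} (v : Word n) (i : Fin n) : flip v i i = v i + 1 := by
  simp [flip]

lemma flip_ne {n : ℕ} (v : Word n) {i j : Fin n} (h : j ≠ i) : flip v i j = v j := by
  simp [flip, Function.update_of_ne h]

lemma flip_inj {n : ℕ} (v : Word n) : Function.Injective (flip v) := by
  intro i j h
  by_contra hne
  have h1 : flip v i i = flip v j i := by rw [h]
  rw [flip_self, flip_ne v (fun hh : i = j => hne hh)] at h1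
  exact zmod2_succ_ne _ h1

lemma hd_def {n : ℕ} (v w : Word n) :
    hammingDist v w = (Finset.univ.filter fun i => v i ≠ w i).card := rfl

lemma dist_one_iff {n : ℕ} (v w : Word n) :
    hammingDist v w = 1 ↔ ∃ i, w = flip v i := by
  constructor
  · intro h
    rw [hd_def] at h
    obtain ⟨i, hi⟩ := Finset.card_eq_one.mp h
    refine ⟨i, funext fun j => ?_⟩
    by_cases hj : j = i
    · subst hj
      have hmem : j ∈ Finset.univ.filter fun i => v i ≠ w i := by
        rw [hi]; exact Finset.mem_singleton_self j
      have : v j ≠ w j := by simpa using hmem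
      rw [flip_self]
      exact zmod2_of_ne _ _ this
    · have hmem : j ∉ Finset.univ.filter fun i => v i ≠ w i := by
        rw [hi]; simpa using hj
      have : v j = w j := by simpa using hmem
      rw [flip_ne v hj]; exact this.symm
  · rintro ⟨i, rfl⟩
    rw [hd_def]
    have hset : (Finset.univ.filter fun j => v j ≠ flip v i j) = {i} := by
      ext j
      simp only [Finset.mem_filter, Finset.mem_univ, true_and, Finset.mem_singleton]
      constructor
      · intro h
        by_contra hj
        exact h (flip_ne v hj).symm
      · rintro rfl
        rw [flip_self]
        exact fun h => zmod2_succ_ne _ h.symm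
    rw [hset, Finset.card_singleton]

lemma dist_flip_of_eq {n : ℕ} (v u : Word n) (i : Fin n) (h : v i = u i) :
    hammingDist (flip v i) u = hammingDist v u + 1 := by
  rw [hd_def, hd_def]
  have hset : (Finset.univ.filter fun j => flip v i j ≠ u j)
      = insert i (Finset.univ.filter fun j => v j ≠ u j) := by
    ext j
    simp only [Finset.mem_filter, Finset.mem_univ, true_and, Finset.mem_insert]
    by_cases hj : j = i
    · subst hj
      simp only [flip_self, true_or, iff_true]
      rw [← h]
      exact fun hh => zmod2_succ_ne _ hh
    · rw [flip_ne v hj]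
      simp [hj]
  rw [hset, Finset.card_insert_of_notMem (by simp [h])]

lemma dist_flip_of_ne {n : ℕ} (v u : Word n) (i : Fin n) (h : v i ≠ u i) :
    hammingDist (flip v i) u + 1 = hammingDist v u := by
  rw [hd_def, hd_def]
  have hset : (Finset.univ.filter fun j => v j ≠ u j)
      = insert i (Finset.univ.filter fun j => flip v i j ≠ u j) := by
    ext j
    simp only [Finset.mem_filter, Finset.mem_univ, true_and, Finset.mem_insert]
    by_cases hj : j = i
    · subst hj
      simp [h]
    · rw [flip_ne v hj]
      simp [hj]
  have hnm : i ∉ Finset.univ.filter fun j => flip v i j ≠ u j := by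
    simp only [Finset.mem_filter, Finset.mem_univ, true_and, not_not]
    rw [flip_self]
    exact (zmod2_of_ne _ _ h).symm
  rw [hset, Finset.card_insert_of_notMem hnm]

def phi {n : ℕ} (v : Word n) : ZMod 2 := ∑ i, v i

lemma cast_hammingDist {n : ℕ} (v u : Word n) :
    ((hammingDist v u : ℕ) : ZMod 2) = phi v + phi u := by
  rw [hd_def, Finset.card_eq_sum_ones, Nat.cast_sum]
  have h1 : ∑ i ∈ Finset.univ.filter (fun i => v i ≠ u i), ((1 : ℕ) : ZMod 2)
      = ∑ i : Fin n, (v i + u i) := by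
    rw [Finset.sum_filter]
    refine Finset.sum_congr rfl fun i _ => ?_
    have : ∀ a b : ZMod 2, (if a ≠ b then ((1:ℕ):ZMod 2) else 0) = a + b := by decide
    exact this _ _
  rw [h1, Finset.sum_add_distrib]
  rfl

lemma phi_zero {n : ℕ} {u : Word n} (h : Even (hammingDist u 0)) : phi u = 0 := by
  have h1 := cast_hammingDist u 0
  have h2 : phi (0 : Word n) = 0 := by simp [phi]
  obtain ⟨k, hk⟩ := h
  rw [hk] at h1
  rw [h2, add_zero] at h1
  have : ((k + k : ℕ) : ZMod 2) = 0 := by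
    push_cast
    have h2 : (2 : ZMod 2) = 0 := by decide
    calc (k : ZMod 2) + k = 2 * k := by ring
    _ = 0 := by rw [h2]; ring
  rw [this] at h1
  exact h1.symm

lemma distTo_le {n : ℕ} {F : Set (Word n)} {u : Word n} (hu : u ∈ F) (v : Word n) :
    distTo F v ≤ hammingDist v u :=
  Nat.sInf_le ⟨u, hu, rfl⟩

lemma distTo_attained {n : ℕ} {F : Set (Word n)} (hF : F.Nonempty) (v : Word n) :
    ∃ u ∈ F, hammingDist v u = distTo F v := by
  have := Nat.sInf_mem (hF.image (hammingDist v))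
  obtain ⟨u, hu, h⟩ := this
  exact ⟨u, hu, h⟩

lemma distTo_lip {n : ℕ} {F : Set (Word n)} (hF : F.Nonempty) (v w : Word n) :
    distTo F w ≤ distTo F v + hammingDist v w := by
  obtain ⟨u, hu, hd⟩ := distTo_attained hF v
  calc distTo F w ≤ hammingDist w u := distTo_le hu w
    _ ≤ hammingDist w v + hammingDist v u := hammingDist_triangle _ _ _
    _ = distTo F v + hammingDist v w := by rw [hd, hammingDist_comm w v]; omega

end GolayAux


open GolayAux

/-- The distance coloring of an extended binary Golay code `F` is a perfect coloring of the
hypercube `H(24)` (adjacency: Hamming distance 1) with the parameter matrix `golayMatrixH`: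
it is surjective onto the colors `{0,…,4}`, and every word `v` of color `i = distTo F v` has,
for each color `j`, exactly `golayMatrixH i j` neighbors of color `j`. -/
theorem golay_distance_coloring_H24
    (F : Set (Word 24)) (hcard : F.ncard = 2 ^ 12)
    (heven : ∀ u ∈ F, Even (hammingDist u 0))
    (hdist : ∀ u ∈ F, ∀ v ∈ F, u ≠ v → 8 ≤ hammingDist u v)
    (hcov : ∀ v : Word 24, ∃ u ∈ F, hammingDist v u ≤ 4) :
    (∀ j : Fin 5, ∃ v : Word 24, distTo F v = j) ∧
    (∀ v : Word 24, ∃ i : Fin 5, distTo F v = i ∧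
      ∀ j : Fin 5,
        {w | hammingDist v w = 1 ∧ distTo F w = j}.ncard = golayMatrixH i j) := by
  classical
  have hF : F.Nonempty := Set.nonempty_of_ncard_ne_zero (by rw [hcard]; norm_num)
  have hle4 : ∀ v : Word 24, distTo F v ≤ 4 := fun v => by
    obtain ⟨u, hu, h⟩ := hcov v
    exact le_trans (distTo_le hu v) h
  have hcast : ∀ v : Word 24, ((distTo F v : ℕ) : ZMod 2) = phi v := fun v => by
    obtain ⟨u, hu, hd⟩ := distTo_attained hF v
    rw [← hd, cast_hammingDist, phi_zero (heven u hu), add_zero]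
  have hne : ∀ v w : Word 24, hammingDist v w = 1 → distTo F w ≠ distTo F v := by
    intro v w h1 heq
    have h2 := cast_hammingDist v w
    rw [h1] at h2
    have h3 := hcast v
    have h4 := hcast w
    rw [heq] at h4
    rw [← h3, ← h4] at h2
    have hh : ∀ c : ZMod 2, ((1 : ℕ) : ZMod 2) ≠ c + c := by decide
    exact hh _ h2
  have hcases : ∀ v w : Word 24, hammingDist v w = 1 →
      distTo F w + 1 = distTo F v ∨ distTo F w = distTo F v + 1 := by
    intro v w h1
    have h2 := distTo_lip hF v w
    have h3 := distTo_lip hF w v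
    rw [h1] at h2
    rw [hammingDist_comm w v, h1] at h3
    have h4 := hne v w h1
    omega
  have hNset : ∀ v : Word 24, {w | hammingDist v w = 1} = Set.range (flip v) := by
    intro v; ext w
    simp only [Set.mem_setOf_eq, Set.mem_range, dist_one_iff v w]
    exact ⟨fun ⟨i, h⟩ => ⟨i, h.symm⟩, fun ⟨i, h⟩ => ⟨i, h.symm⟩⟩
  have hNfin : ∀ v : Word 24, {w | hammingDist v w = 1}.Finite := by
    intro v; rw [hNset]; exact Set.finite_range _
  have hNcard : ∀ v : Word 24, {w | hammingDist v w = 1}.ncard = 24 := by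
    intro v
    rw [hNset, ← Set.image_univ, Set.ncard_image_of_injective _ (flip_inj v),
      Set.ncard_univ]
    simp
  have huniq : ∀ (v u1 u2 : Word 24), u1 ∈ F → u2 ∈ F → hammingDist v u1 ≤ 3 →
      hammingDist v u2 ≤ 3 → u1 = u2 := by
    intro v u1 u2 h1 h2 h3 h4
    by_contra hne12
    have h5 := hdist u1 h1 u2 h2 hne12
    have h6 := hammingDist_triangle u1 v u2
    rw [hammingDist_comm u1 v] at h6
    omega
  have hdiffc : ∀ v u : Word 24, {i | v i ≠ u i}.ncard = hammingDist v u := by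
    intro v u
    rw [hd_def]
    rw [show {i | v i ≠ u i} = ↑(Finset.univ.filter fun i => v i ≠ u i) by ext i; simp]
    exact Set.ncard_coe_finset _
  have hdown : ∀ (v u : Word 24) (k : ℕ), u ∈ F → hammingDist v u = distTo F v →
      distTo F v = k + 1 → k + 1 ≤ 3 →
      {w | hammingDist v w = 1 ∧ distTo F w = k} = flip v '' {i | v i ≠ u i} := by
    intro v u k huF huv hk hk3
    ext w
    simp only [Set.mem_setOf_eq, Set.mem_image]
    constructor
    · rintro ⟨h1, h2⟩
      obtain ⟨i, rfl⟩ := (dist_one_iff v w).mp h1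
      obtain ⟨u', hu'F, hu'⟩ := distTo_attained hF (flip v i)
      have htri := hammingDist_triangle v (flip v i) u'
      have hge := distTo_le hu'F v
      have hvu' : hammingDist v u' = k + 1 := by omega
      have heq : u' = u := huniq v u' u hu'F huF (by omega) (by omega)
      subst heq
      refine ⟨i, ?_, rfl⟩
      intro hvi
      have := dist_flip_of_eq v u' i hvi
      omega
    · rintro ⟨i, hi, rfl⟩
      have hd1 : hammingDist v (flip v i) = 1 := (dist_one_iff v _).mpr ⟨i, rfl⟩
      have hdn := dist_flip_of_ne v u i hi
      have hle : distTo F (flip v i) ≤ k :=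
        le_trans (distTo_le huF _) (by omega)
      have hge := distTo_lip hF (flip v i) v
      rw [hammingDist_comm (flip v i) v, hd1] at hge
      exact ⟨hd1, by omega⟩
  have hdowncard : ∀ (v : Word 24) (k : ℕ), distTo F v = k + 1 → k + 1 ≤ 3 →
      {w | hammingDist v w = 1 ∧ distTo F w = k}.ncard = k + 1 := by
    intro v k hk hk3
    obtain ⟨u, huF, huv⟩ := distTo_attained hF v
    rw [hdown v u k huF huv hk hk3, Set.ncard_image_of_injective _ (flip_inj v),
      hdiffc]
    omega
  have hupcard : ∀ (v : Word 24) (k : ℕ), distTo F v = k + 1 → k + 1 ≤ 3 →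
      {w | hammingDist v w = 1 ∧ distTo F w = k + 2}.ncard = 23 - k := by
    intro v k hk hk3
    have hDsub : {w | hammingDist v w = 1 ∧ distTo F w = k} ⊆ {w | hammingDist v w = 1} :=
      fun w hw => hw.1
    have hUeq : {w | hammingDist v w = 1 ∧ distTo F w = k + 2}
        = {w | hammingDist v w = 1} \ {w | hammingDist v w = 1 ∧ distTo F w = k} := by
      ext w
      simp only [Set.mem_setOf_eq, Set.mem_diff, not_and]
      constructor
      · rintro ⟨h1, h2⟩
        exact ⟨h1, fun _ => by omega⟩
      · rintro ⟨h1, h2⟩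
        rcases hcases v w h1 with hh | hh
        · exact absurd (show distTo F w = k by omega) (h2 h1)
        · exact ⟨h1, by omega⟩
    rw [hUeq, Set.ncard_diff hDsub ((hNfin v).subset hDsub), hNcard, hdowncard v k hk hk3]
    omega
  have hzero : ∀ (v : Word 24) (j : ℕ), j + 1 ≠ distTo F v → j ≠ distTo F v + 1 →
      {w | hammingDist v w = 1 ∧ distTo F w = j}.ncard = 0 := by
    intro v j h1 h2
    have hemp : {w | hammingDist v w = 1 ∧ distTo F w = j} = ∅ := by
      ext w
      simp only [Set.mem_setOf_eq, Set.mem_empty_iff_false, iff_false, not_and]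
      intro hw hj
      rcases hcases v w hw with hh | hh <;> omega
    rw [hemp]
    simp
  have hall : ∀ (v : Word 24) (j : ℕ), (∀ w : Word 24, hammingDist v w = 1 → distTo F w = j) →
      {w | hammingDist v w = 1 ∧ distTo F w = j}.ncard = 24 := by
    intro v j h
    rw [show {w | hammingDist v w = 1 ∧ distTo F w = j} = {w | hammingDist v w = 1} from
      Set.ext fun w => ⟨fun hw => hw.1, fun hw => ⟨hw, h w hw⟩⟩]
    exact hNcard v
  refine ⟨?_, ?_⟩
  · -- surjectivity
    intro j
    obtain ⟨u0, hu0⟩ := id hF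
    have hc4 : (j : ℕ) ≤ 4 := by omega
    have hfiltcard : ∀ c : ℕ, c ≤ 4 →
        (Finset.univ.filter fun i : Fin 24 => (i : ℕ) < c).card = c := by
      intro c hc
      interval_cases c <;> decide
    refine ⟨fun i => if (i : ℕ) < (j : ℕ) then u0 i + 1 else u0 i, ?_⟩
    set v : Word 24 := fun i => if (i : ℕ) < (j : ℕ) then u0 i + 1 else u0 i with hv
    have hdv : hammingDist v u0 = (j : ℕ) := by
      rw [hd_def]
      have hs : (Finset.univ.filter fun i : Fin 24 => v i ≠ u0 i)
          = Finset.univ.filter fun i : Fin 24 => (i : ℕ) < (j : ℕ) := by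
        ext i
        simp only [Finset.mem_filter, Finset.mem_univ, true_and, hv]
        by_cases hi : (i : ℕ) < (j : ℕ)
        · simp [hi, zmod2_succ_ne]
        · simp [hi]
      rw [hs]
      exact hfiltcard _ hc4
    have hle := distTo_le hu0 v
    obtain ⟨u', hu', hd'⟩ := distTo_attained hF v
    by_cases he : u' = u0
    · subst he
      omega
    · have h8 := hdist u0 hu0 u' hu' (Ne.symm he)
      have htri := hammingDist_triangle u0 v u'
      rw [hammingDist_comm u0 v] at htri
      omega
  · intro v
    have h4 := hle4 v
    have hd5 : distTo F v = 0 ∨ distTo F v = 1 ∨ distTo F v = 2 ∨ distTo F v = 3 ∨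
        distTo F v = 4 := by omega
    rcases hd5 with h | h | h | h | h
    · refine ⟨0, by rw [h]; rfl, ?_⟩
      intro j
      fin_cases j
      · exact Eq.trans (hzero v 0 (by omega) (by omega)) (by decide)
      · refine Eq.trans (hall v 1 fun w hw => ?_) (by decide)
        rcases hcases v w hw with hh | hh <;> omega
      · exact Eq.trans (hzero v 2 (by omega) (by omega)) (by decide)
      · exact Eq.trans (hzero v 3 (by omega) (by omega)) (by decide)
      · exact Eq.trans (hzero v 4 (by omega) (by omega)) (by decide)
    · refine ⟨1, by rw [h]; rfl, ?_⟩
      intro j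
      fin_cases j
      · exact Eq.trans (hdowncard v 0 (by omega) (by omega)) (by decide)
      · exact Eq.trans (hzero v 1 (by omega) (by omega)) (by decide)
      · exact Eq.trans (hupcard v 0 (by omega) (by omega)) (by decide)
      · exact Eq.trans (hzero v 3 (by omega) (by omega)) (by decide)
      · exact Eq.trans (hzero v 4 (by omega) (by omega)) (by decide)
    · refine ⟨2, by rw [h]; rfl, ?_⟩
      intro j
      fin_cases j
      · exact Eq.trans (hzero v 0 (by omega) (by omega)) (by decide)
      · exact Eq.trans (hdowncard v 1 (by omega) (by omega)) (by decide)
      · exact Eq.trans (hzero v 2 (by omega) (by omega)) (by decide)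
      · exact Eq.trans (hupcard v 1 (by omega) (by omega)) (by decide)
      · exact Eq.trans (hzero v 4 (by omega) (by omega)) (by decide)
    · refine ⟨3, by rw [h]; rfl, ?_⟩
      intro j
      fin_cases j
      · exact Eq.trans (hzero v 0 (by omega) (by omega)) (by decide)
      · exact Eq.trans (hzero v 1 (by omega) (by omega)) (by decide)
      · exact Eq.trans (hdowncard v 2 (by omega) (by omega)) (by decide)
      · exact Eq.trans (hzero v 3 (by omega) (by omega)) (by decide)
      · exact Eq.trans (hupcard v 2 (by omega) (by omega)) (by decide)
    · refine ⟨4, by rw [h]; rfl, ?_⟩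
      intro j
      fin_cases j
      · exact Eq.trans (hzero v 0 (by omega) (by omega)) (by decide)
      · exact Eq.trans (hzero v 1 (by omega) (by omega)) (by decide)
      · exact Eq.trans (hzero v 2 (by omega) (by omega)) (by decide)
      · refine Eq.trans (hall v 3 fun w hw => ?_) (by decide)
        have := hle4 w
        rcases hcases v w hw with hh | hh <;> omega
      · exact Eq.trans (hzero v 4 (by omega) (by omega)) (by decide)
end

section
/- Let F ⊆ F_2^24 be a set of 2^12 binary words of length 24, all of even Hamming weight, with pairwise Hamming distances at least 8, and such that every word of F_2^24 is at Hamming distance at most 4 from F (an extended binary Golay code). Then the distance coloring T, assigning to each word its Hamming distance to F, is a perfect coloring of the distance-2 graph HH(24) with parameter matrix (rows and columns indexed by colors 0,…,4): row 0 = (0,0,276,0,0), row 1 = (0,23,0,253,0), row 2 = (1,0,44,0,231), row 3 = (0,3,0,273,0), row 4 = (0,0,36,0,240). -/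
/-- The parameter matrix of the distance coloring of the Golay code in `HH(24)`. -/
def golayMatrixHH : Matrix (Fin 5) (Fin 5) ℕ :=
  !![0,  0, 276,   0,   0;
     0, 23,   0, 253,   0;
     1,  0,  44,   0, 231;
     0,  3,   0, 273,   0;
     0,  0,  36,   0, 240]

/-!
A word at distance at most 3 from the code has a unique nearest codeword (the minimum distance is
8). Hence the colors 0–3 are unions of disjoint Hamming spheres, color 4 has
`2 ^ 24 - 2 ^ 12 * (1 + 24 + 276 + 2024)` words, and an entry `(i, j)` with `i + j + 2 < 8` is an
intersection number of the hypercube. A word of color 4 is at distance 4 from at most six codewords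
(the differences have pairwise disjoint supports), and double counting the pairs
(word, codeword at distance 4) shows that it is at distance 4 from exactly six; this gives its
`6 * choose 4 2 = 36` neighbours of color 2. The remaining entries follow from parity (all
codewords are even, so two colors and the distance between the words add up to an even number)
and from every row summing to `choose 24 2 = 276`.
-/

open Finset
open scoped symmDiff

section FinsetCount

variable {α : Type*} [DecidableEq α]

theorem card_symmDiff_add_two_mul_card_inter (s t : Finset α) :
    #(s ∆ t) + 2 * #(s ∩ t) = #s + #t := by
  rw [symmDiff_eq_sup_sdiff_inf, card_sdiff_of_subset (inf_le_sup : s ⊓ t ≤ s ⊔ t)]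
  have := card_union_add_card_inter s t
  have := card_le_card (inf_le_sup : s ⊓ t ≤ s ⊔ t)
  simp only [sup_eq_union, inf_eq_inter] at *
  omega

variable [Fintype α]

theorem card_filter_card_eq_card_inter_eq (A : Finset α) {b t : ℕ} (htb : t ≤ b) :
    #{s : Finset α | #s = b ∧ #(A ∩ s) = t} =
      (#A).choose t * (Fintype.card α - #A).choose (b - t) := by
  rw [← card_compl, ← card_powersetCard, ← card_powersetCard, ← card_product]
  refine card_nbij' (fun s => (A ∩ s, s \ A)) (fun p => p.1 ∪ p.2) ?_ ?_ ?_ ?_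
  · intro s hs
    rw [mem_coe, mem_filter] at hs
    rw [mem_coe, mem_product, mem_powersetCard, mem_powersetCard]
    dsimp only
    have := card_sdiff_add_card_inter s A
    rw [inter_comm] at this
    exact ⟨⟨inter_subset_left, hs.2.2⟩, fun i hi => by simp_all, by omega⟩
  · rintro ⟨x, y⟩ hxy
    rw [mem_coe, mem_product, mem_powersetCard, mem_powersetCard] at hxy
    obtain ⟨⟨hxA, hx⟩, hyA, hy⟩ := hxy
    dsimp only at *
    have hdisj : Disjoint A y := by simpa [subset_compl_iff_disjoint_left] using hyA
    have hinter : A ∩ (x ∪ y) = x := by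
      rw [inter_union_distrib_left, inter_eq_right.mpr hxA,
        disjoint_iff_inter_eq_empty.mp hdisj, union_empty]
    rw [mem_coe, mem_filter, card_union_of_disjoint ((hdisj.mono_left hxA)), hinter, hx, hy]
    exact ⟨mem_univ _, by omega, rfl⟩
  · intro s _
    dsimp only
    rw [inter_comm, union_comm, sdiff_union_inter]
  · rintro ⟨x, y⟩ hxy
    rw [mem_coe, mem_product, mem_powersetCard, mem_powersetCard] at hxy
    obtain ⟨⟨hxA, -⟩, hyA, -⟩ := hxy
    dsimp only at *
    have hdisj : Disjoint A y := by simpa [subset_compl_iff_disjoint_left] using hyA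
    simp only [Prod.mk.injEq]
    constructor
    · rw [inter_union_distrib_left, inter_eq_right.mpr hxA,
        disjoint_iff_inter_eq_empty.mp hdisj, union_empty]
    · rw [union_sdiff_distrib, sdiff_eq_empty_iff_subset.mpr hxA, hdisj.symm.sdiff_eq_left,
        empty_union]

end FinsetCount

section Words

variable {n : ℕ}

def wordEquivFinset : Word n ≃ Finset (Fin n) where
  toFun x := {i | x i ≠ 0}
  invFun s i := if i ∈ s then 1 else 0
  left_inv x := by
    funext i
    have : ∀ a : ZMod 2, (if a ≠ 0 then 1 else 0) = a := by decide
    simpa using this (x i)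
  right_inv s := by
    ext i
    by_cases h : i ∈ s <;> simp [h]

theorem card_wordEquivFinset (x : Word n) : #(wordEquivFinset x) = hammingNorm x := rfl

theorem wordEquivFinset_add (x y : Word n) :
    wordEquivFinset (x + y) = wordEquivFinset x ∆ wordEquivFinset y := by
  ext i
  simp only [wordEquivFinset, Equiv.coe_fn_mk, mem_symmDiff, mem_filter, mem_univ, true_and,
    Pi.add_apply]
  generalize x i = a, y i = b
  revert a b
  decide

theorem hammingDist_eq_hammingNorm_add (x y : Word n) : hammingDist x y = hammingNorm (x + y) := by
  rw [hammingDist_eq_hammingNorm, ZModModule.neg_eq_self]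

theorem even_hammingDist_add_hammingDist_add_hammingDist (a b c : Word n) :
    Even (hammingDist a b + hammingDist b c + hammingDist a c) := by
  have hac : a + c = (a + b) + (b + c) := by
    rw [add_assoc, ← add_assoc b, ZModModule.add_self, zero_add]
  have := card_symmDiff_add_two_mul_card_inter (wordEquivFinset (a + b)) (wordEquivFinset (b + c))
  rw [← wordEquivFinset_add, ← hac] at this
  simp only [card_wordEquivFinset, ← hammingDist_eq_hammingNorm_add] at this
  exact ⟨hammingDist a c + #(wordEquivFinset (a + b) ∩ wordEquivFinset (b + c)), by omega⟩

theorem card_filter_hammingDist_eq_and_hammingDist_eq (u v : Word n) {a b t : ℕ}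
    (hab : a + 2 * t = hammingDist u v + b) (htb : t ≤ b) :
    #{w : Word n | hammingDist v w = a ∧ hammingDist u w = b} =
      (hammingDist u v).choose t * (n - hammingDist u v).choose (b - t) := by
  have hA : #(wordEquivFinset (v + u)) = hammingDist u v := by
    rw [card_wordEquivFinset, hammingDist_comm, hammingDist_eq_hammingNorm_add]
  -- substitute `w = u + x` and pass to the support of `x`
  calc #{w : Word n | hammingDist v w = a ∧ hammingDist u w = b}
      = #{s : Finset (Fin n) | #s = b ∧ #(wordEquivFinset (v + u) ∩ s) = t} := by
        refine card_equiv ((Equiv.addLeft u).trans wordEquivFinset) fun w => ?_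
        have hvw : v + w = (v + u) + (u + w) := by
          rw [add_assoc, ← add_assoc u, ZModModule.add_self, zero_add]
        have := card_symmDiff_add_two_mul_card_inter (wordEquivFinset (v + u))
          (wordEquivFinset (u + w))
        simp only [mem_filter, mem_univ, true_and, Equiv.trans_apply, Equiv.coe_addLeft,
          hammingDist_eq_hammingNorm_add, ← card_wordEquivFinset, hvw,
          wordEquivFinset_add (v + u)]
        omega
    _ = (hammingDist u v).choose t * (n - hammingDist u v).choose (b - t) := by
        rw [card_filter_card_eq_card_inter_eq _ htb, Fintype.card_fin, hA]

end Words

section Code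

variable {n δ r : ℕ} {F : Set (Word n)} {u v w : Word n}

theorem card_filter_hammingDist_eq (v : Word n) (k : ℕ) :
    #{w : Word n | hammingDist v w = k} = n.choose k := by
  simpa using card_filter_hammingDist_eq_and_hammingDist_eq v v (a := k) (b := k) (t := 0)
    (by simp) (Nat.zero_le k)

theorem distTo_le_hammingDist (hu : u ∈ F) : distTo F v ≤ hammingDist v u :=
  Nat.sInf_le ⟨u, hu, rfl⟩

theorem exists_mem_hammingDist_eq_distTo (hF : F.Nonempty) (v : Word n) :
    ∃ u ∈ F, hammingDist v u = distTo F v :=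
  Nat.sInf_mem (hF.image _)

theorem distTo_le_distTo_add_hammingDist (hF : F.Nonempty) (v w : Word n) :
    distTo F v ≤ distTo F w + hammingDist v w := by
  obtain ⟨u, hu, hwu⟩ := exists_mem_hammingDist_eq_distTo hF w
  calc distTo F v ≤ hammingDist v u := distTo_le_hammingDist hu
    _ ≤ hammingDist v w + hammingDist w u := hammingDist_triangle v w u
    _ = distTo F w + hammingDist v w := by rw [hwu, add_comm]

theorem eq_of_hammingDist_add_hammingDist_lt (hdist : F.Pairwise (δ ≤ hammingDist · ·))
    {u' : Word n} (hu : u ∈ F) (hu' : u' ∈ F) (h : hammingDist v u + hammingDist v u' < δ) :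
    u = u' := by
  by_contra hne
  have := hammingDist_triangle_left u u' v
  have := hdist hu hu' hne
  omega

theorem distTo_eq_hammingDist (hdist : F.Pairwise (δ ≤ hammingDist · ·))
    (hu : u ∈ F) (h : hammingDist v u + distTo F v < δ) : distTo F v = hammingDist v u := by
  obtain ⟨u', hu', hvu'⟩ := exists_mem_hammingDist_eq_distTo ⟨u, hu⟩ v
  rw [← hvu', eq_of_hammingDist_add_hammingDist_lt (v := v) hdist hu hu' (by omega)]

theorem even_distTo_add_distTo_add_hammingDist (heven : ∀ u ∈ F, Even (hammingDist u 0))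
    (hF : F.Nonempty) (v w : Word n) : Even (distTo F v + distTo F w + hammingDist v w) := by
  obtain ⟨u, hu, hvu⟩ := exists_mem_hammingDist_eq_distTo hF v
  obtain ⟨u', hu', hwu'⟩ := exists_mem_hammingDist_eq_distTo hF w
  have h₁ := even_hammingDist_add_hammingDist_add_hammingDist v w u'
  have h₂ := even_hammingDist_add_hammingDist_add_hammingDist v u u'
  have h₃ := even_hammingDist_add_hammingDist_add_hammingDist u u' 0
  have h₄ := heven u hu
  have h₅ := heven u' hu'
  rw [← hvu, ← hwu']
  rw [Nat.even_iff] at *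
  omega

open scoped Classical in
noncomputable def codewordsAt (F : Set (Word n)) (v : Word n) (r : ℕ) : Finset (Word n) :=
  {u ∈ F.toFinset | hammingDist v u = r}

theorem mem_codewordsAt : u ∈ codewordsAt F v r ↔ u ∈ F ∧ hammingDist v u = r := by
  simp [codewordsAt]

theorem sum_card_codewordsAt (F : Set (Word n)) (r : ℕ) :
    ∑ v, #(codewordsAt F v r) = F.ncard * n.choose r := by
  classical
  calc ∑ v, #(codewordsAt F v r)
      = ∑ u ∈ F.toFinset, #(univ.bipartiteBelow (fun v u => hammingDist v u = r) u) :=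
        sum_card_bipartiteAbove_eq_sum_card_bipartiteBelow _
    _ = ∑ u ∈ F.toFinset, n.choose r := by
        refine sum_congr rfl fun u _ => ?_
        simp only [bipartiteBelow, hammingDist_comm _ u]
        exact card_filter_hammingDist_eq u r
    _ = F.ncard * n.choose r := by
        rw [sum_const, smul_eq_mul, Set.ncard_eq_toFinset_card']

theorem mul_card_codewordsAt_le (hdist : F.Pairwise (δ ≤ hammingDist · ·))
    (hr : 2 * r ≤ δ) (v : Word n) : r * #(codewordsAt F v r) ≤ n := by
  set S := fun u => wordEquivFinset (v + u)
  have hS : ∀ u ∈ codewordsAt F v r, #(S u) = r := fun u hu => by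
    rw [card_wordEquivFinset, ← hammingDist_eq_hammingNorm_add, (mem_codewordsAt.mp hu).2]
  -- the supports of `v + u` have size `r`, and their symmetric differences size at least `2 r`
  have hdisj : (codewordsAt F v r : Set (Word n)).PairwiseDisjoint S := by
    intro u hu u' hu' hne
    rw [mem_coe, mem_codewordsAt] at hu hu'
    have huu' : #(S u ∆ S u') = hammingDist u u' := by
      rw [← wordEquivFinset_add, add_add_add_comm, ZModModule.add_self, zero_add,
        card_wordEquivFinset, hammingDist_eq_hammingNorm_add]
    have := card_symmDiff_add_two_mul_card_inter (S u) (S u')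
    have := hdist hu.1 hu'.1 hne
    rw [Function.onFun, disjoint_iff_inter_eq_empty, ← card_eq_zero]
    have h1 := hS u (mem_codewordsAt.mpr hu)
    have h2 := hS u' (mem_codewordsAt.mpr hu')
    omega
  calc r * #(codewordsAt F v r) = #((codewordsAt F v r).biUnion S) := by
        rw [card_biUnion hdisj, sum_congr rfl hS, sum_const, smul_eq_mul, mul_comm]
    _ ≤ n := by simpa using card_le_univ ((codewordsAt F v r).biUnion S)

theorem card_codewordsAt_eq_ite (hdist : F.Pairwise (δ ≤ hammingDist · ·))
    (hF : F.Nonempty) (hr : 2 * r < δ) (v : Word n) :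
    #(codewordsAt F v r) = if distTo F v = r then 1 else 0 := by
  split_ifs with hv
  · obtain ⟨u, hu, hvu⟩ := exists_mem_hammingDist_eq_distTo hF v
    refine card_eq_one.mpr ⟨u, eq_singleton_iff_unique_mem.mpr ⟨?_, fun u' hu' => ?_⟩⟩
    · exact mem_codewordsAt.mpr ⟨hu, hvu.trans hv⟩
    · rw [mem_codewordsAt] at hu'
      exact eq_of_hammingDist_add_hammingDist_lt (v := v) hdist hu'.1 hu (by omega)
  · refine card_eq_zero.mpr (eq_empty_of_forall_notMem fun u hu => hv ?_)
    rw [mem_codewordsAt] at hu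
    have := distTo_le_hammingDist (v := v) hu.1
    rw [distTo_eq_hammingDist hdist hu.1 (by omega), hu.2]

theorem card_filter_distTo_eq (hdist : F.Pairwise (δ ≤ hammingDist · ·))
    (hF : F.Nonempty) (hr : 2 * r < δ) : #{v | distTo F v = r} = F.ncard * n.choose r := by
  rw [← sum_card_codewordsAt, sum_congr rfl fun v _ => card_codewordsAt_eq_ite hdist hF hr v,
    sum_boole, Nat.cast_id]

end Code

section Neighbors

variable {n δ r j : ℕ} {F : Set (Word n)} {v : Word n}

noncomputable def neighborsOfColor (F : Set (Word n)) (v : Word n) (j : ℕ) : Finset (Word n) :=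
  {w | hammingDist v w = 2 ∧ distTo F w = j}

theorem mem_neighborsOfColor {w : Word n} :
    w ∈ neighborsOfColor F v j ↔ hammingDist v w = 2 ∧ distTo F w = j := by
  simp [neighborsOfColor]

theorem ncard_setOf_eq_card_neighborsOfColor (F : Set (Word n)) (v : Word n) (j : ℕ) :
    {w | hammingDist v w = 2 ∧ distTo F w = j}.ncard = #(neighborsOfColor F v j) := by
  rw [← Set.ncard_coe_finset, neighborsOfColor, coe_filter]
  simp only [mem_univ, true_and]

theorem sum_range_card_neighborsOfColor (hcov : ∀ v : Word n, distTo F v ≤ r) (v : Word n) :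
    ∑ j ∈ range (r + 1), #(neighborsOfColor F v j) = n.choose 2 := by
  rw [← card_filter_hammingDist_eq v 2,
    card_eq_sum_card_fiberwise (f := distTo F) (t := range (r + 1))
      fun w _ => mem_range.mpr (Nat.lt_succ_of_le (hcov w))]
  simp only [neighborsOfColor, filter_filter]

theorem card_neighborsOfColor_eq_zero_of_odd (heven : ∀ u ∈ F, Even (hammingDist u 0))
    (hF : F.Nonempty) (h : Odd (distTo F v + j)) : #(neighborsOfColor F v j) = 0 := by
  refine card_eq_zero.mpr (eq_empty_of_forall_notMem fun w hw => ?_)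
  rw [mem_neighborsOfColor] at hw
  have := even_distTo_add_distTo_add_hammingDist heven hF v w
  rw [hw.1, hw.2] at this
  exact Nat.not_even_iff_odd.mpr h (by simpa [Nat.even_add] using this)

theorem card_neighborsOfColor_eq_zero_of_add_two_lt (hF : F.Nonempty) (h : j + 2 < distTo F v) :
    #(neighborsOfColor F v j) = 0 := by
  refine card_eq_zero.mpr (eq_empty_of_forall_notMem fun w hw => ?_)
  rw [mem_neighborsOfColor] at hw
  have := distTo_le_distTo_add_hammingDist hF v w
  omega

theorem card_neighborsOfColor_eq_choose_mul_choose
    (hdist : F.Pairwise (δ ≤ hammingDist · ·)) (hF : F.Nonempty) {t : ℕ}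
    (ht : 2 + 2 * t = distTo F v + j) (htj : t ≤ j) (hδ : distTo F v + j + 2 < δ) :
    #(neighborsOfColor F v j) = (distTo F v).choose t * (n - distTo F v).choose (j - t) := by
  obtain ⟨u, hu, hvu⟩ := exists_mem_hammingDist_eq_distTo hF v
  have huv : hammingDist u v = distTo F v := by rw [hammingDist_comm, hvu]
  -- every word at distance 2 from `v` with color `j` has `u` as its nearest codeword
  have hnbr : neighborsOfColor F v j =
      ({w | hammingDist v w = 2 ∧ hammingDist u w = j} : Finset (Word n)) := by
    ext w
    rw [mem_neighborsOfColor, mem_filter]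
    refine ⟨fun ⟨hvw, hw⟩ => ⟨mem_univ w, hvw, ?_⟩, fun ⟨_, hvw, huw⟩ => ⟨hvw, ?_⟩⟩
    all_goals
      have htri := hammingDist_triangle u v w
      have hle := distTo_le_hammingDist (v := w) hu
      rw [hammingDist_comm w u] at hle
      have := distTo_eq_hammingDist (v := w) hdist hu (by rw [hammingDist_comm]; omega)
      rw [hammingDist_comm] at this
      omega
  rw [hnbr, card_filter_hammingDist_eq_and_hammingDist_eq u v (by omega) htj, huv]

theorem card_neighborsOfColor_eq_card_codewordsAt_mul
    (hdist : F.Pairwise (δ ≤ hammingDist · ·)) (hF : F.Nonempty)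
    (hv : distTo F v = j + 2) (hj : 2 * j < δ) :
    #(neighborsOfColor F v j) = #(codewordsAt F v (j + 2)) * (j + 2).choose 2 := by
  set N := fun u => ({w | hammingDist v w = 2 ∧ hammingDist u w = j} : Finset (Word n))
  have hnbr : neighborsOfColor F v j = (codewordsAt F v (j + 2)).biUnion N := by
    ext w
    simp only [mem_neighborsOfColor, mem_biUnion, mem_codewordsAt, N, mem_filter, mem_univ,
      true_and]
    constructor
    · rintro ⟨hvw, hw⟩
      obtain ⟨u, hu, hwu⟩ := exists_mem_hammingDist_eq_distTo hF w
      have := hammingDist_triangle v w u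
      have := distTo_le_hammingDist (v := v) hu
      exact ⟨u, ⟨hu, by omega⟩, hvw, by rw [hammingDist_comm]; omega⟩
    · rintro ⟨u, ⟨hu, -⟩, hvw, huw⟩
      have := distTo_le_hammingDist (v := w) hu
      rw [hammingDist_comm] at huw
      exact ⟨hvw, huw ▸ distTo_eq_hammingDist hdist hu (by omega)⟩
  have hdisj : (codewordsAt F v (j + 2) : Set (Word n)).PairwiseDisjoint N := by
    intro u hu u' hu' hne
    refine disjoint_left.mpr fun w hw hw' => hne ?_
    simp only [N, mem_filter, mem_univ, true_and] at hw hw'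
    rw [mem_coe, mem_codewordsAt] at hu hu'
    exact eq_of_hammingDist_add_hammingDist_lt (v := w) hdist hu.1 hu'.1
      (by rw [hammingDist_comm w u, hammingDist_comm w u']; omega)
  have hN : ∀ u ∈ codewordsAt F v (j + 2), #(N u) = (j + 2).choose 2 := fun u hu => by
    have huv : hammingDist u v = j + 2 := by
      rw [hammingDist_comm, (mem_codewordsAt.mp hu).2]
    rw [card_filter_hammingDist_eq_and_hammingDist_eq u v (t := j) (by omega) le_rfl, huv,
      Nat.sub_self, Nat.choose_zero_right, mul_one, Nat.choose_symm_add]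
  rw [hnbr, card_biUnion hdisj, sum_congr rfl hN, sum_const, smul_eq_mul]

end Neighbors

structure IsExtendedGolayCode (F : Set (Word 24)) : Prop where
  ncard_eq : F.ncard = 2 ^ 12
  even : ∀ u ∈ F, Even (hammingDist u 0)
  dist : F.Pairwise (8 ≤ hammingDist · ·)
  covering : ∀ v : Word 24, ∃ u ∈ F, hammingDist v u ≤ 4

namespace IsExtendedGolayCode

variable {F : Set (Word 24)} {v : Word 24}

theorem nonempty (hF : IsExtendedGolayCode F) : F.Nonempty :=
  Set.nonempty_of_ncard_ne_zero (by rw [hF.ncard_eq]; norm_num)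

theorem distTo_le_four (hF : IsExtendedGolayCode F) (v : Word 24) : distTo F v ≤ 4 := by
  obtain ⟨u, hu, hvu⟩ := hF.covering v
  exact (distTo_le_hammingDist hu).trans hvu

theorem card_filter_distTo_eq_four (hF : IsExtendedGolayCode F) :
    #{v : Word 24 | distTo F v = 4} = 7254016 := by
  have hsum := card_eq_sum_card_fiberwise (s := univ) (t := range 5) (f := distTo F)
    fun v _ => mem_range.mpr (Nat.lt_succ_of_le (hF.distTo_le_four v))
  simp only [sum_range_succ, sum_range_zero, card_univ, Fintype.card_pi, prod_const,
    ZMod.card] at hsum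
  rw [card_filter_distTo_eq hF.dist hF.nonempty (by norm_num),
    card_filter_distTo_eq hF.dist hF.nonempty (by norm_num),
    card_filter_distTo_eq hF.dist hF.nonempty (by norm_num),
    card_filter_distTo_eq hF.dist hF.nonempty (by norm_num), hF.ncard_eq] at hsum
  norm_num [Nat.choose] at hsum
  omega

-- Double counting: `∑ v, #(codewordsAt F v 4) = 2 ^ 12 * choose 24 4 = 6 * #{v | distTo F v = 4}`,
-- and only words of color 4 have codewords at distance 4.
theorem card_codewordsAt_four (hF : IsExtendedGolayCode F) (hv : distTo F v = 4) :
    #(codewordsAt F v 4) = 6 := by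
  have hle : ∀ x ∈ ({x | distTo F x = 4} : Finset (Word 24)), #(codewordsAt F x 4) ≤ 6 :=
    fun x _ => by have := mul_card_codewordsAt_le hF.dist (r := 4) (by norm_num) x; omega
  have hzero : ∀ x, distTo F x ≠ 4 → #(codewordsAt F x 4) = 0 := fun x hx => by
    refine card_eq_zero.mpr (eq_empty_of_forall_notMem fun u hu => hx ?_)
    rw [mem_codewordsAt] at hu
    have := hF.distTo_le_four x
    rw [distTo_eq_hammingDist hF.dist hu.1 (by omega), hu.2]
  have hsum : ∑ x ∈ ({x | distTo F x = 4} : Finset (Word 24)), #(codewordsAt F x 4) =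
      ∑ x ∈ ({x | distTo F x = 4} : Finset (Word 24)), 6 := by
    rw [sum_filter_of_ne fun x _ h => (not_imp_comm.mp (hzero x) h), sum_card_codewordsAt,
      sum_const, smul_eq_mul, hF.card_filter_distTo_eq_four, hF.ncard_eq]
    decide
  exact (sum_eq_sum_iff_of_le hle).mp hsum v (by simpa using hv)

theorem exists_distTo_eq (hF : IsExtendedGolayCode F) (j : Fin 5) : ∃ v, distTo F v = j := by
  have hpos : 0 < #{v : Word 24 | distTo F v = j} := by
    rcases Nat.lt_or_ge (j : ℕ) 4 with hj | hj
    · rw [card_filter_distTo_eq hF.dist hF.nonempty (by omega), hF.ncard_eq]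
      exact Nat.mul_pos (by norm_num) (Nat.choose_pos (by omega))
    · rw [show (j : ℕ) = 4 by omega, hF.card_filter_distTo_eq_four]
      norm_num
  obtain ⟨v, hv⟩ := card_pos.mp hpos
  exact ⟨v, (mem_filter.mp hv).2⟩

theorem sum_card_neighborsOfColor (hF : IsExtendedGolayCode F) (v : Word 24) :
    #(neighborsOfColor F v 0) + #(neighborsOfColor F v 1) + #(neighborsOfColor F v 2) +
      #(neighborsOfColor F v 3) + #(neighborsOfColor F v 4) = 276 := by
  simpa [sum_range_succ, Nat.choose] using sum_range_card_neighborsOfColor hF.distTo_le_four v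

theorem card_neighborsOfColor_of_distTo_eq_zero (hF : IsExtendedGolayCode F)
    (hv : distTo F v = 0) (j : Fin 5) : #(neighborsOfColor F v j) = golayMatrixHH 0 j := by
  have h2 : #(neighborsOfColor F v 2) = 276 := by
    rw [card_neighborsOfColor_eq_choose_mul_choose (t := 0) hF.dist hF.nonempty
      (by omega) (by omega) (by omega), hv]
    rfl
  have hsum := hF.sum_card_neighborsOfColor v
  fin_cases j <;> simp [golayMatrixHH, -card_eq_zero] <;> omega

theorem card_neighborsOfColor_of_distTo_eq_one (hF : IsExtendedGolayCode F)
    (hv : distTo F v = 1) (j : Fin 5) : #(neighborsOfColor F v j) = golayMatrixHH 1 j := by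
  have h1 : #(neighborsOfColor F v 1) = 23 := by
    rw [card_neighborsOfColor_eq_choose_mul_choose (t := 0) hF.dist hF.nonempty
      (by omega) (by omega) (by omega), hv]
    rfl
  have h3 : #(neighborsOfColor F v 3) = 253 := by
    rw [card_neighborsOfColor_eq_choose_mul_choose (t := 1) hF.dist hF.nonempty
      (by omega) (by omega) (by omega), hv]
    rfl
  have hsum := hF.sum_card_neighborsOfColor v
  fin_cases j <;> simp [golayMatrixHH, -card_eq_zero] <;> omega

theorem card_neighborsOfColor_of_distTo_eq_two (hF : IsExtendedGolayCode F)
    (hv : distTo F v = 2) (j : Fin 5) : #(neighborsOfColor F v j) = golayMatrixHH 2 j := by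
  have h0 : #(neighborsOfColor F v 0) = 1 := by
    rw [card_neighborsOfColor_eq_choose_mul_choose (t := 0) hF.dist hF.nonempty
      (by omega) (by omega) (by omega), hv]
    rfl
  have h2 : #(neighborsOfColor F v 2) = 44 := by
    rw [card_neighborsOfColor_eq_choose_mul_choose (t := 1) hF.dist hF.nonempty
      (by omega) (by omega) (by omega), hv]
    rfl
  have h1 := card_neighborsOfColor_eq_zero_of_odd (j := 1) hF.even hF.nonempty
    (by rw [hv]; decide)
  have h3 := card_neighborsOfColor_eq_zero_of_odd (j := 3) hF.even hF.nonempty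
    (by rw [hv]; decide)
  have hsum := hF.sum_card_neighborsOfColor v
  fin_cases j <;> simp [golayMatrixHH, -card_eq_zero] <;> omega

theorem card_neighborsOfColor_of_distTo_eq_three (hF : IsExtendedGolayCode F)
    (hv : distTo F v = 3) (j : Fin 5) : #(neighborsOfColor F v j) = golayMatrixHH 3 j := by
  have h1 : #(neighborsOfColor F v 1) = 3 := by
    rw [card_neighborsOfColor_eq_choose_mul_choose (t := 1) hF.dist hF.nonempty
      (by omega) (by omega) (by omega), hv]
    rfl
  have h0 := card_neighborsOfColor_eq_zero_of_odd (j := 0) hF.even hF.nonempty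
    (by rw [hv]; decide)
  have h2 := card_neighborsOfColor_eq_zero_of_odd (j := 2) hF.even hF.nonempty
    (by rw [hv]; decide)
  have h4 := card_neighborsOfColor_eq_zero_of_odd (j := 4) hF.even hF.nonempty
    (by rw [hv]; decide)
  have hsum := hF.sum_card_neighborsOfColor v
  fin_cases j <;> simp [golayMatrixHH, -card_eq_zero] <;> omega

theorem card_neighborsOfColor_of_distTo_eq_four (hF : IsExtendedGolayCode F)
    (hv : distTo F v = 4) (j : Fin 5) : #(neighborsOfColor F v j) = golayMatrixHH 4 j := by
  have h0 := card_neighborsOfColor_eq_zero_of_add_two_lt (v := v) (j := 0) hF.nonempty (by omega)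
  have h2 : #(neighborsOfColor F v 2) = 36 := by
    rw [card_neighborsOfColor_eq_card_codewordsAt_mul hF.dist hF.nonempty hv (by norm_num),
      hF.card_codewordsAt_four hv]
    rfl
  have h1 := card_neighborsOfColor_eq_zero_of_odd (j := 1) hF.even hF.nonempty
    (by rw [hv]; decide)
  have h3 := card_neighborsOfColor_eq_zero_of_odd (j := 3) hF.even hF.nonempty
    (by rw [hv]; decide)
  have hsum := hF.sum_card_neighborsOfColor v
  fin_cases j <;> simp [golayMatrixHH, -card_eq_zero] <;> omega

theorem card_neighborsOfColor_eq_golayMatrixHH (hF : IsExtendedGolayCode F) {i : Fin 5}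
    (hv : distTo F v = i) (j : Fin 5) : #(neighborsOfColor F v j) = golayMatrixHH i j := by
  fin_cases i
  exacts [hF.card_neighborsOfColor_of_distTo_eq_zero hv j,
    hF.card_neighborsOfColor_of_distTo_eq_one hv j, hF.card_neighborsOfColor_of_distTo_eq_two hv j,
    hF.card_neighborsOfColor_of_distTo_eq_three hv j,
    hF.card_neighborsOfColor_of_distTo_eq_four hv j]

end IsExtendedGolayCode

/-- The distance coloring of an extended binary Golay code `F` is a perfect coloring of the
distance-2 graph `HH(24)` (adjacency: Hamming distance exactly 2) with the parameter matrix
`golayMatrixHH`: it is surjective onto the colors `{0,…,4}`, and every word `v` of color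
`i = distTo F v` has, for each color `j`, exactly `golayMatrixHH i j` neighbors of color `j`. -/
theorem golay_distance_coloring_HH24
    (F : Set (Word 24)) (hcard : F.ncard = 2 ^ 12)
    (heven : ∀ u ∈ F, Even (hammingDist u 0))
    (hdist : ∀ u ∈ F, ∀ v ∈ F, u ≠ v → 8 ≤ hammingDist u v)
    (hcov : ∀ v : Word 24, ∃ u ∈ F, hammingDist v u ≤ 4) :
    (∀ j : Fin 5, ∃ v : Word 24, distTo F v = j) ∧
    (∀ v : Word 24, ∃ i : Fin 5, distTo F v = i ∧
      ∀ j : Fin 5,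
        {w | hammingDist v w = 2 ∧ distTo F w = j}.ncard = golayMatrixHH i j) := by
  have hF : IsExtendedGolayCode F := ⟨hcard, heven, fun _ hu _ hv => hdist _ hu _ hv, hcov⟩
  refine ⟨hF.exists_distTo_eq, fun v => ?_⟩
  refine ⟨⟨distTo F v, Nat.lt_succ_of_le (hF.distTo_le_four v)⟩, rfl, fun j => ?_⟩
  rw [ncard_setOf_eq_card_neighborsOfColor]
  exact hF.card_neighborsOfColor_eq_golayMatrixHH rfl j
end

section
/- Let F ⊆ F_2^24 be a set of 2^12 binary words of length 24, all of even Hamming weight, with pairwise Hamming distances at least 8, and such that every word of F_2^24 is at Hamming distance at most 4 from F (an extended binary Golay code). Let Ω(F) be the set of words at Hamming distance exactly 1 from F; all words of Ω(F) have odd weight. Then χ_{Ω(F)} is a perfect 2-coloring of the odd-weight component of HH(24) with parameters ((23, 253)(3, 273)). -/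
/-- The even-weight words of `F_2^n`. -/
def evenWords (n : ℕ) : Set (Word n) := {v | Even (hammingDist v 0)}

/-- `χ_C` is a perfect 2-coloring with parameters `((a,b)(c,d))` of the graph with vertex set
`V ⊆ F_2^n` in which two words are adjacent iff their Hamming distance is exactly 2:
`C ⊆ V`, both colors occur, every vertex of `C` has exactly `a` neighbors in `C` and
`b` neighbors outside `C`, and every vertex of `V \ C` has exactly `c` neighbors in `C` and
`d` neighbors outside `C`. -/
def IsPerfect2Coloring {n : ℕ} (V C : Set (Word n)) (a b c d : ℕ) : Prop :=
  C ⊆ V ∧ C.Nonempty ∧ (V \ C).Nonempty ∧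
  (∀ v ∈ C,
    {w | w ∈ V ∧ hammingDist v w = 2 ∧ w ∈ C}.ncard = a ∧
    {w | w ∈ V ∧ hammingDist v w = 2 ∧ w ∉ C}.ncard = b) ∧
  (∀ v ∈ V \ C,
    {w | w ∈ V ∧ hammingDist v w = 2 ∧ w ∈ C}.ncard = c ∧
    {w | w ∈ V ∧ hammingDist v w = 2 ∧ w ∉ C}.ncard = d)

/-- The odd-weight words of `F_2^n`. -/
def oddWords (n : ℕ) : Set (Word n) := {v | Odd (hammingDist v 0)}

namespace GolayAux

open Finset
open scoped symmDiff

variable {n : ℕ}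

/-- Indicator word of a finset of coordinates. -/
def ind (s : Finset (Fin n)) : Word n := fun j => if j ∈ s then 1 else 0

/-- Support of a word. -/
def sup (v : Word n) : Finset (Fin n) := univ.filter (fun j => v j ≠ 0)

lemma ind_sup (v : Word n) : ind (sup v) = v := by
  funext j
  have h : v j = 0 ∨ v j = 1 := (by decide : ∀ a : ZMod 2, a = 0 ∨ a = 1) _
  rcases h with h | h <;> simp [ind, sup, h]

lemma add_self (v : Word n) : v + v = 0 := by
  funext j
  simpa using (by decide : ∀ a : ZMod 2, a + a = 0) (v j)

lemma ind_injective : Function.Injective (ind (n := n)) := by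
  intro s t h
  ext j
  have hj := congrFun h j
  by_cases hjs : j ∈ s <;> by_cases hjt : j ∈ t <;>
    simp [ind, hjs, hjt] at hj ⊢

lemma ind_add (s t : Finset (Fin n)) : ind s + ind t = ind (s ∆ t) := by
  funext j
  by_cases hjs : j ∈ s <;> by_cases hjt : j ∈ t <;>
    simp [ind, Finset.mem_symmDiff, hjs, hjt] <;> decide

lemma hd_ind (x : Word n) (s t : Finset (Fin n)) :
    hammingDist (x + ind s) (x + ind t) = (s ∆ t).card := by
  simp only [hammingDist]
  congr 1
  ext j
  simp only [Finset.mem_filter, Finset.mem_univ, true_and, Pi.add_apply]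
  constructor
  · intro h
    by_cases hjs : j ∈ s <;> by_cases hjt : j ∈ t <;>
      simp [ind, Finset.mem_symmDiff, hjs, hjt] at h ⊢
  · intro h
    rw [Finset.mem_symmDiff] at h
    rcases h with ⟨hjs, hjt⟩ | ⟨hjt, hjs⟩ <;>
      simp [ind, hjs, hjt] <;> decide

lemma hd_add_ind (x : Word n) (t : Finset (Fin n)) :
    hammingDist x (x + ind t) = t.card := by
  have h0 : ind (∅ : Finset (Fin n)) = 0 := by funext j; simp [ind]
  have := hd_ind x ∅ t
  rw [h0, add_zero] at this
  rw [this]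
  congr 1
  simp [symmDiff_eq_sup_sdiff_inf]

lemma card_symmDiff (s t : Finset (Fin n)) :
    (s ∆ t).card + 2 * (s ∩ t).card = s.card + t.card := by
  rw [symmDiff_eq_sup_sdiff_inf, sup_eq_union, inf_eq_inter,
    Finset.card_sdiff_of_subset (Finset.inter_subset_union)]
  have h1 := Finset.card_union_add_card_inter s t
  have h2 : (s ∩ t).card ≤ (s ∪ t).card :=
    Finset.card_le_card Finset.inter_subset_union
  omega

lemma hd_eq_symmDiff (v w : Word n) :
    hammingDist v w = (sup v ∆ sup w).card := by
  have := hd_ind 0 (sup v) (sup w)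
  rwa [zero_add, zero_add, ind_sup, ind_sup] at this

lemma hd_parity (v w : Word n) :
    hammingDist v w % 2 = (hammingDist v 0 + hammingDist w 0) % 2 := by
  have h0 : sup (0 : Word n) = ∅ := by
    ext j; simp [sup]
  have hv := hd_eq_symmDiff v 0
  have hw := hd_eq_symmDiff w 0
  have hvw := hd_eq_symmDiff v w
  rw [h0] at hv hw
  simp only [symmDiff_eq_sup_sdiff_inf, sup_eq_union, inf_eq_inter,
    Finset.union_empty, Finset.inter_empty, Finset.sdiff_empty] at hv hw
  have := card_symmDiff (sup v) (sup w)
  omega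

lemma exists_rep (v w : Word n) :
    ∃ s : Finset (Fin n), w = v + ind s ∧ hammingDist v w = s.card := by
  refine ⟨sup (v + w), ?_, ?_⟩
  · rw [ind_sup]
    funext j
    have : (v + (v + w)) j = w j := by
      simp [← add_assoc]
      have := congrFun (add_self v) j
      simp at this
      simp [this]
    exact this.symm
  · have h : v + ind (sup (v + w)) = w := by
      rw [ind_sup]
      funext j
      simp [← add_assoc]
      have := congrFun (add_self v) j
      simp at this
      simp [this]
    rw [← h, hd_add_ind, h]

lemma count_total : ((univ : Finset (Fin 24)).powersetCard 2).card = 276 := by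
  rw [Finset.card_powersetCard, Finset.card_univ, Fintype.card_fin]
  decide

lemma count_mem (i : Fin 24) :
    (((univ : Finset (Fin 24)).powersetCard 2).filter (fun s => i ∈ s)).card = 23 := by
  have himg : ((univ : Finset (Fin 24)).powersetCard 2).filter (fun s => i ∈ s)
      = (univ.erase i).image (fun k => ({i, k} : Finset (Fin 24))) := by
    ext s
    simp only [Finset.mem_filter, Finset.mem_powersetCard, Finset.mem_image,
      Finset.mem_erase, Finset.mem_univ, and_true]
    constructor
    · rintro ⟨⟨-, hcard⟩, hi⟩
      have hc1 : (s.erase i).card = 1 := by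
        rw [Finset.card_erase_of_mem hi, hcard]
      obtain ⟨k, hk⟩ := Finset.card_eq_one.mp hc1
      have hki : k ∈ s.erase i := hk ▸ Finset.mem_singleton_self k
      refine ⟨k, (Finset.mem_erase.mp hki).1, ?_⟩
      have h2 := Finset.insert_erase hi
      rw [hk] at h2
      exact h2
    · rintro ⟨k, hki, rfl⟩
      refine ⟨⟨Finset.subset_univ _, ?_⟩, Finset.mem_insert_self i {k}⟩
      rw [Finset.card_insert_of_notMem (by simp [Ne.symm hki]), Finset.card_singleton]
  rw [himg, Finset.card_image_of_injOn, Finset.card_erase_of_mem (Finset.mem_univ i),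
    Finset.card_univ, Fintype.card_fin]
  intro k hk k' hk' h
  have h'' : ({i, k} : Finset (Fin 24)) = {i, k'} := h
  have hmem : k ∈ ({i, k'} : Finset (Fin 24)) := by
    rw [← h'']; exact Finset.mem_insert_of_mem (Finset.mem_singleton_self k)
  rcases Finset.mem_insert.mp hmem with h' | h'
  · exact absurd h' (by simpa using hk)
  · exact Finset.mem_singleton.mp h'

lemma count_sub (t : Finset (Fin 24)) (ht : t.card = 3) :
    (((univ : Finset (Fin 24)).powersetCard 2).filter (fun s => s ⊆ t)).card = 3 := by
  have himg : ((univ : Finset (Fin 24)).powersetCard 2).filter (fun s => s ⊆ t)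
      = t.powersetCard 2 := by
    ext s
    simp only [Finset.mem_filter, Finset.mem_powersetCard, Finset.subset_univ, true_and]
    tauto
  rw [himg, Finset.card_powersetCard, ht]
  decide

/-- Generic counting lemma: points at distance 2 from `v` satisfying `P`. -/
lemma ncard_eq (v : Word 24) (P : Word 24 → Prop) [DecidablePred P] :
    {w | hammingDist v w = 2 ∧ P w}.ncard
      = (((univ : Finset (Fin 24)).powersetCard 2).filter (fun s => P (v + ind s))).card := by
  classical
  have himg : {w | hammingDist v w = 2 ∧ P w}
      = ↑((((univ : Finset (Fin 24)).powersetCard 2).filter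
          (fun s => P (v + ind s))).image (fun s => v + ind s)) := by
    ext w
    simp only [Set.mem_setOf_eq, Finset.coe_image, Set.mem_image, Finset.mem_coe,
      Finset.mem_filter, Finset.mem_powersetCard, Finset.subset_univ, true_and]
    constructor
    · rintro ⟨h2, hP⟩
      obtain ⟨s, rfl, hcard⟩ := exists_rep v w
      exact ⟨s, ⟨by omega, hP⟩, rfl⟩
    · rintro ⟨s, ⟨hcard, hP⟩, rfl⟩
      exact ⟨by rw [hd_add_ind, hcard], hP⟩
  rw [himg, Set.ncard_coe_finset, Finset.card_image_of_injOn]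
  intro s _ t _ hst
  exact ind_injective (add_left_cancel hst)

end GolayAux

/-- For an extended binary Golay code `F`, the set `Ω(F)` of words at Hamming distance
exactly 1 from `F` (all of odd weight) gives a perfect 2-coloring of the odd-weight
component of `HH(24)` with parameters `((23, 253)(3, 273))`. -/
theorem golay_neighborhood_perfect_coloring
    (F : Set (Word 24)) (hcard : F.ncard = 2 ^ 12)
    (heven : ∀ u ∈ F, Even (hammingDist u 0))
    (hdist : ∀ u ∈ F, ∀ v ∈ F, u ≠ v → 8 ≤ hammingDist u v)
    (hcov : ∀ v : Word 24, ∃ u ∈ F, hammingDist v u ≤ 4) :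
    IsPerfect2Coloring (oddWords 24) {w | distTo F w = 1} 23 253 3 273 := by
  classical
  open Finset GolayAux in
  open scoped symmDiff in
  -- F is nonempty
  have hFne : F.Nonempty := by
    rcases Set.eq_empty_or_nonempty F with h | h
    · rw [h, Set.ncard_empty] at hcard; norm_num at hcard
    · exact h
  have himg : ∀ w : Word 24, (hammingDist w '' F).Nonempty := fun w => hFne.image _
  -- characterization of distTo = 1
  have hD1 : ∀ w : Word 24, distTo F w = 1 ↔ ∃ u ∈ F, hammingDist w u = 1 := by
    intro w
    constructor
    · intro h
      have hm := Nat.sInf_mem (himg w)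
      rw [show sInf (hammingDist w '' F) = distTo F w from rfl, h] at hm
      obtain ⟨u, hu, hdu⟩ := hm
      exact ⟨u, hu, hdu⟩
    · rintro ⟨u, hu, hdu⟩
      have h1 : distTo F w ≤ 1 := Nat.sInf_le ⟨u, hu, hdu⟩
      have h0 : distTo F w ≠ 0 := by
        intro h'
        have hm := Nat.sInf_mem (himg w)
        rw [show sInf (hammingDist w '' F) = distTo F w from rfl, h'] at hm
        obtain ⟨u', hu', hdu'⟩ := hm
        have hwu : w = u' := hammingDist_eq_zero.mp hdu'
        have hne : u' ≠ u := by
          rintro rfl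
          rw [← hwu, hammingDist_self] at hdu
          omega
        have := hdist u' hu' u hu hne
        rw [← hwu] at this
        omega
      omega
  -- parity relative to codewords
  have hpar : ∀ w : Word 24, ∀ u ∈ F, hammingDist w u % 2 = hammingDist w 0 % 2 := by
    intro w u hu
    have h := hd_parity w u
    have he := heven u hu
    rw [Nat.even_iff] at he
    omega
  -- uniqueness of nearby codewords
  have huniq : ∀ (w : Word 24) (u u' : Word 24), u ∈ F → u' ∈ F →
      hammingDist w u + hammingDist w u' ≤ 7 → u = u' := by
    intro w u u' hu hu' hle
    by_contra hne
    have h8 := hdist u hu u' hu' hne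
    have ht := hammingDist_triangle u w u'
    rw [hammingDist_comm u w] at ht
    omega
  -- Ω ⊆ oddWords
  have hsub : {w | distTo F w = 1} ⊆ oddWords 24 := by
    intro w hw
    obtain ⟨u, hu, hdu⟩ := (hD1 w).mp hw
    have := hpar w u hu
    rw [hdu] at this
    exact Nat.odd_iff.mpr (by omega)
  refine ⟨hsub, ?_, ?_, ?_, ?_⟩
  -- Ω nonempty
  · obtain ⟨u, hu⟩ := hFne
    refine ⟨u + ind {(0 : Fin 24)}, (hD1 _).mpr ⟨u, hu, ?_⟩⟩
    rw [hammingDist_comm, hd_add_ind]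
    rfl
  -- oddWords \ Ω nonempty
  · obtain ⟨u, hu⟩ := hFne
    set v := u + ind ({0, 1, 2} : Finset (Fin 24)) with hv
    have hd3 : hammingDist v u = 3 := by
      rw [hammingDist_comm, hd_add_ind]; decide
    refine ⟨v, ⟨?_, ?_⟩⟩
    · have := hpar v u hu
      rw [hd3] at this
      exact Nat.odd_iff.mpr (by omega)
    · intro hmem
      obtain ⟨u', hu', hdu'⟩ := (hD1 v).mp hmem
      have := huniq v u u' hu hu' (by omega)
      rw [← this] at hdu'
      omega
  -- vertices in Ω
  · intro v hv
    obtain ⟨u, hu, hvu⟩ := (hD1 v).mp hv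
    have hvodd : hammingDist v 0 % 2 = 1 := by
      have := hpar v u hu; omega
    obtain ⟨σ, hrep, hσcard⟩ := exists_rep u v
    rw [hammingDist_comm] at hvu
    rw [hvu] at hσcard
    obtain ⟨i, rfl⟩ := Finset.card_eq_one.mp hσcard.symm
    -- every word at distance 2 from v has odd weight
    have hodd2 : ∀ w : Word 24, hammingDist v w = 2 → w ∈ oddWords 24 := by
      intro w h2
      have := hd_parity v w
      rw [h2] at this
      exact Nat.odd_iff.mpr (by omega)
    have hseteq1 : {w | w ∈ oddWords 24 ∧ hammingDist v w = 2 ∧ w ∈ {w | distTo F w = 1}}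
        = {w | hammingDist v w = 2 ∧ distTo F w = 1} := by
      ext w
      simp only [Set.mem_setOf_eq]
      exact ⟨fun h => ⟨h.2.1, h.2.2⟩, fun h => ⟨hodd2 w h.1, h.1, h.2⟩⟩
    have hseteq2 : {w | w ∈ oddWords 24 ∧ hammingDist v w = 2 ∧ w ∉ {w | distTo F w = 1}}
        = {w | hammingDist v w = 2 ∧ ¬ distTo F w = 1} := by
      ext w
      simp only [Set.mem_setOf_eq]
      exact ⟨fun h => ⟨h.2.1, h.2.2⟩, fun h => ⟨hodd2 w h.1, h.1, h.2⟩⟩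
    -- the key equivalence
    have hkey : ∀ s : Finset (Fin 24), s ∈ (univ : Finset (Fin 24)).powersetCard 2 →
        (distTo F (v + ind s) = 1 ↔ i ∈ s) := by
      intro s hs
      rw [Finset.mem_powersetCard] at hs
      have hscard : s.card = 2 := hs.2
      have hwrep : v + ind s = u + ind ({i} ∆ s) := by
        rw [hrep, add_assoc, ind_add]
      have hdwu : hammingDist (v + ind s) u = ({i} ∆ s).card := by
        rw [hammingDist_comm, hwrep, hd_add_ind]
      have hcs := card_symmDiff ({i} : Finset (Fin 24)) s
      rw [Finset.card_singleton, hscard] at hcs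
      have hile : ({i} ∩ s).card ≤ 1 := by
        have := Finset.card_le_card (Finset.inter_subset_left (s₁ := ({i} : Finset (Fin 24))) (s₂ := s))
        simpa using this
      constructor
      · intro h1
        obtain ⟨u', hu', hdu'⟩ := (hD1 _).mp h1
        have hequ : u = u' := huniq (v + ind s) u u' hu hu' (by omega)
        rw [← hequ] at hdu'
        rw [hdwu] at hdu'
        by_contra hin
        have : ({i} ∩ s).card = 0 := by
          rw [Finset.card_eq_zero, Finset.singleton_inter_of_notMem hin]
        omega
      · intro hin
        refine (hD1 _).mpr ⟨u, hu, ?_⟩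
        rw [hdwu]
        have : ({i} ∩ s).card = 1 := by
          rw [Finset.singleton_inter_of_mem hin, Finset.card_singleton]
        omega
    have hfilter : ((univ : Finset (Fin 24)).powersetCard 2).filter
          (fun s => distTo F (v + ind s) = 1)
        = ((univ : Finset (Fin 24)).powersetCard 2).filter (fun s => i ∈ s) :=
      Finset.filter_congr (fun s hs => by rw [hkey s hs])
    have hfilterneg : ((univ : Finset (Fin 24)).powersetCard 2).filter
          (fun s => ¬ distTo F (v + ind s) = 1)
        = ((univ : Finset (Fin 24)).powersetCard 2).filter (fun s => i ∉ s) :=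
      Finset.filter_congr (fun s hs => by rw [hkey s hs])
    constructor
    · rw [hseteq1, ncard_eq v (fun w => distTo F w = 1), hfilter, count_mem]
    · rw [hseteq2, ncard_eq v (fun w => ¬ distTo F w = 1), hfilterneg]
      have := Finset.card_filter_add_card_filter_not
        (s := (univ : Finset (Fin 24)).powersetCard 2) (p := fun s => i ∈ s)
      rw [count_total] at this
      rw [count_mem i] at this
      omega
  -- vertices in oddWords \ Ω
  · rintro v ⟨hvodd', hvnot⟩
    have hvodd : hammingDist v 0 % 2 = 1 := Nat.odd_iff.mp hvodd'
    -- find the codeword at distance 3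
    obtain ⟨u, hu, hle⟩ := hcov v
    have hp := hpar v u hu
    have hne1 : hammingDist v u ≠ 1 := by
      intro h1
      exact hvnot ((hD1 v).mpr ⟨u, hu, h1⟩)
    have hd3 : hammingDist v u = 3 := by omega
    obtain ⟨σ, hrep, hσcard⟩ := exists_rep u v
    rw [hammingDist_comm] at hd3
    rw [hd3] at hσcard
    have hσ3 : σ.card = 3 := hσcard.symm
    have hodd2 : ∀ w : Word 24, hammingDist v w = 2 → w ∈ oddWords 24 := by
      intro w h2
      have := hd_parity v w
      rw [h2] at this
      exact Nat.odd_iff.mpr (by omega)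
    have hseteq1 : {w | w ∈ oddWords 24 ∧ hammingDist v w = 2 ∧ w ∈ {w | distTo F w = 1}}
        = {w | hammingDist v w = 2 ∧ distTo F w = 1} := by
      ext w
      simp only [Set.mem_setOf_eq]
      exact ⟨fun h => ⟨h.2.1, h.2.2⟩, fun h => ⟨hodd2 w h.1, h.1, h.2⟩⟩
    have hseteq2 : {w | w ∈ oddWords 24 ∧ hammingDist v w = 2 ∧ w ∉ {w | distTo F w = 1}}
        = {w | hammingDist v w = 2 ∧ ¬ distTo F w = 1} := by
      ext w
      simp only [Set.mem_setOf_eq]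
      exact ⟨fun h => ⟨h.2.1, h.2.2⟩, fun h => ⟨hodd2 w h.1, h.1, h.2⟩⟩
    have hkey : ∀ s : Finset (Fin 24), s ∈ (univ : Finset (Fin 24)).powersetCard 2 →
        (distTo F (v + ind s) = 1 ↔ s ⊆ σ) := by
      intro s hs
      rw [Finset.mem_powersetCard] at hs
      have hscard : s.card = 2 := hs.2
      have hwrep : v + ind s = u + ind (σ ∆ s) := by
        rw [hrep, add_assoc, ind_add]
      have hdwu : hammingDist (v + ind s) u = (σ ∆ s).card := by
        rw [hammingDist_comm, hwrep, hd_add_ind]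
      have hcs := card_symmDiff σ s
      rw [hσ3, hscard] at hcs
      have hile : (σ ∩ s).card ≤ 2 := by
        have := Finset.card_le_card (Finset.inter_subset_right (s₁ := σ) (s₂ := s))
        omega
      constructor
      · intro h1
        obtain ⟨u', hu', hdu'⟩ := (hD1 _).mp h1
        have hequ : u = u' := huniq (v + ind s) u u' hu hu' (by omega)
        rw [← hequ, hdwu] at hdu'
        have h2 : (σ ∩ s).card = 2 := by omega
        have hss : σ ∩ s = s := Finset.eq_of_subset_of_card_le
          (Finset.inter_subset_right) (by omega)
        exact Finset.inter_eq_right.mp hss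
      · intro hss
        refine (hD1 _).mpr ⟨u, hu, ?_⟩
        rw [hdwu]
        have : σ ∩ s = s := Finset.inter_eq_right.mpr hss
        rw [this, hscard] at hcs
        omega
    have hfilter : ((univ : Finset (Fin 24)).powersetCard 2).filter
          (fun s => distTo F (v + ind s) = 1)
        = ((univ : Finset (Fin 24)).powersetCard 2).filter (fun s => s ⊆ σ) :=
      Finset.filter_congr (fun s hs => by rw [hkey s hs])
    have hfilterneg : ((univ : Finset (Fin 24)).powersetCard 2).filter
          (fun s => ¬ distTo F (v + ind s) = 1)
        = ((univ : Finset (Fin 24)).powersetCard 2).filter (fun s => ¬ s ⊆ σ) :=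
      Finset.filter_congr (fun s hs => by rw [hkey s hs])
    constructor
    · rw [hseteq1, ncard_eq v (fun w => distTo F w = 1), hfilter, count_sub σ hσ3]
    · rw [hseteq2, ncard_eq v (fun w => ¬ distTo F w = 1), hfilterneg]
      have := Finset.card_filter_add_card_filter_not
        (s := (univ : Finset (Fin 24)).powersetCard 2) (p := fun s => s ⊆ σ)
      rw [count_total] at this
      rw [count_sub σ hσ3] at this
      omega
end

section
/- Let C₈ ⊆ F_2^8 be an (8,16,4)-code and let B ⊆ F_2^8 be an (8,2^7,2)-code. Then the set D = {(x+y, x+z, x+y+z) : x ∈ C₈, y, z ∈ B} ⊆ F_2^24 (concatenation of three length-8 blocks, addition in F_2^8) is a (24, 2^18, 4)-code: it has exactly 2^18 elements and any two distinct elements are at Hamming distance at least 4. -/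
/-- Concatenation of three length-8 blocks into a word of length 24. -/
def cat3 (u v w : Word 8) : Word 24 := Fin.append (Fin.append u v) w

/-- An `(n,M,d)`-code: a set of `M` binary words of length `n` whose pairwise Hamming
distances are all at least `d`. -/
def IsCode (n M d : ℕ) (C : Set (Word n)) : Prop :=
  C.ncard = M ∧ ∀ u ∈ C, ∀ v ∈ C, u ≠ v → d ≤ hammingDist u v

/-!
Write `a = x - x'`, `b = y - y'`, `c = z - z'` for two triples. The difference of the two
codewords is `(a + b, a + c, a + b + c)`, whose three blocks sum to `a` in characteristic 2,
so its weight is at least `wt a ≥ 4` when `x ≠ x'`. When `x = x'` the weight is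
`wt b + wt c + wt (b + c)`, and at least two of these terms are weights of nonzero differences
of words of `B`, each at least 2. In particular distinct triples give distinct codewords, so
`D` has `16 · 2^7 · 2^7 = 2^18` elements.
-/

theorem hammingDist_append {α : Type*} [DecidableEq α] {m n : ℕ} (u u' : Fin m → α)
    (v v' : Fin n → α) :
    hammingDist (Fin.append u v) (Fin.append u' v') = hammingDist u u' + hammingDist v v' := by
  simp only [hammingDist, Finset.card_filter, Fin.sum_univ_add, Fin.append_left,
    Fin.append_right]

theorem hammingDist_cat3 (u v w u' v' w' : Word 8) :
    hammingDist (cat3 u v w) (cat3 u' v' w') =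
      hammingDist u u' + hammingDist v v' + hammingDist w w' := by
  rw [cat3, cat3, ← hammingDist_append, ← hammingDist_append]

section Hamming

variable {ι : Type*} [Fintype ι] {β : ι → Type*} [∀ i, DecidableEq (β i)]

theorem hammingDist_eq_hammingNorm_sub [∀ i, AddCommGroup (β i)] (x y : ∀ i, β i) :
    hammingDist x y = hammingNorm (x - y) := by
  rw [hammingDist_comm, hammingDist_eq_hammingNorm, neg_add_eq_sub]

theorem hammingNorm_add_le [∀ i, AddCommGroup (β i)] (a b : ∀ i, β i) :
    hammingNorm (a + b) ≤ hammingNorm a + hammingNorm b :=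
  calc hammingNorm (a + b) = hammingDist (a + b) 0 := (hammingDist_zero_right _).symm
    _ ≤ hammingDist (a + b) b + hammingDist b 0 := hammingDist_triangle _ _ _
    _ = hammingNorm a + hammingNorm b := by
      rw [hammingDist_eq_hammingNorm_sub, add_sub_cancel_right, hammingDist_zero_right]

theorem two_mul_le_hammingNorm_add_hammingNorm_add [∀ i, AddMonoid (β i)] {e : ℕ}
    {b c : ∀ i, β i} (hb : b ≠ 0 → e ≤ hammingNorm b) (hc : c ≠ 0 → e ≤ hammingNorm c)
    (hbc : b ≠ 0 ∨ c ≠ 0) :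
    2 * e ≤ hammingNorm b + hammingNorm c + hammingNorm (b + c) := by
  by_cases hb0 : b = 0
  · subst hb0
    have := hc (hbc.resolve_left (not_not.mpr rfl))
    simp only [zero_add, hammingNorm_zero]
    omega
  by_cases hc0 : c = 0
  · subst hc0
    have := hb hb0
    simp only [add_zero, hammingNorm_zero]
    omega
  have := hb hb0
  have := hc hc0
  omega

theorem hammingNorm_le_add_add_add (a b c : ι → ZMod 2) :
    hammingNorm a ≤ hammingNorm (a + b) + hammingNorm (a + c) + hammingNorm (a + b + c) := by
  have hsum : a = a + b + (a + c) + (a + b + c) := by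
    have key : ∀ p q r : ZMod 2, p = p + q + (p + r) + (p + q + r) := by decide
    exact funext fun i => key (a i) (b i) (c i)
  calc hammingNorm a ≤ hammingNorm (a + b + (a + c)) + hammingNorm (a + b + c) := by
        nth_rw 1 [hsum]; exact hammingNorm_add_le _ _
    _ ≤ _ := by gcongr; exact hammingNorm_add_le _ _

end Hamming

def tripleSum (x y z : Word 8) : Word 24 := cat3 (x + y) (x + z) (x + y + z)

theorem hammingDist_tripleSum (x y z x' y' z' : Word 8) :
    hammingDist (tripleSum x y z) (tripleSum x' y' z') =
      hammingNorm (x - x' + (y - y')) + hammingNorm (x - x' + (z - z')) +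
        hammingNorm (x - x' + (y - y') + (z - z')) := by
  rw [tripleSum, tripleSum, hammingDist_cat3]
  simp only [hammingDist_eq_hammingNorm_sub, add_sub_add_comm]

theorem min_le_hammingDist_tripleSum {C B : Set (Word 8)} {d e : ℕ}
    (hC : ∀ u ∈ C, ∀ v ∈ C, u ≠ v → d ≤ hammingDist u v)
    (hB : ∀ u ∈ B, ∀ v ∈ B, u ≠ v → e ≤ hammingDist u v)
    {x y z x' y' z' : Word 8} (hx : x ∈ C) (hy : y ∈ B) (hz : z ∈ B)
    (hx' : x' ∈ C) (hy' : y' ∈ B) (hz' : z' ∈ B) (hne : (x, y, z) ≠ (x', y', z')) :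
    min d (2 * e) ≤ hammingDist (tripleSum x y z) (tripleSum x' y' z') := by
  rw [hammingDist_tripleSum]
  by_cases hxx : x = x'
  · subst hxx
    have hyz : y - y' ≠ 0 ∨ z - z' ≠ 0 := by
      simp only [ne_eq, sub_eq_zero]
      by_contra! h
      exact hne (by rw [h.1, h.2])
    simp only [sub_self, zero_add]
    refine min_le_of_right_le (two_mul_le_hammingNorm_add_hammingNorm_add ?_ ?_ hyz)
    · exact fun h => hammingDist_eq_hammingNorm_sub y y' ▸ hB y hy y' hy' (sub_ne_zero.mp h)
    · exact fun h => hammingDist_eq_hammingNorm_sub z z' ▸ hB z hz z' hz' (sub_ne_zero.mp h)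
  · refine min_le_of_left_le ((hC x hx x' hx' hxx).trans ?_)
    rw [hammingDist_eq_hammingNorm_sub]
    exact hammingNorm_le_add_add_add _ _ _

theorem isCode_image {α : Type*} {n d : ℕ} (f : α → Word n) {S : Set α} (hd : 0 < d)
    (hS : ∀ p ∈ S, ∀ q ∈ S, p ≠ q → d ≤ hammingDist (f p) (f q)) :
    IsCode n S.ncard d (f '' S) := by
  have hinj : S.InjOn f := fun p hp q hq hpq => by
    by_contra hne
    have := hS p hp q hq hne
    rw [hpq, hammingDist_self] at this
    omega
  refine ⟨hinj.ncard_image, ?_⟩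
  rintro _ ⟨p, hp, rfl⟩ _ ⟨q, hq, rfl⟩ hne
  exact hS p hp q hq (ne_of_apply_ne f hne)

/-- If `C₈` is an `(8,16,4)`-code and `B` is an `(8,2^7,2)`-code, then
`D = {(x+y, x+z, x+y+z) : x ∈ C₈, y, z ∈ B}` is a `(24, 2^18, 4)`-code. -/
theorem D_is_code (C₈ B : Set (Word 8))
    (hC : IsCode 8 16 4 C₈) (hB : IsCode 8 (2 ^ 7) 2 B) :
    IsCode 24 (2 ^ 18) 4
      {w | ∃ x ∈ C₈, ∃ y ∈ B, ∃ z ∈ B, w = cat3 (x + y) (x + z) (x + y + z)} := by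
  have hD : {w | ∃ x ∈ C₈, ∃ y ∈ B, ∃ z ∈ B, w = cat3 (x + y) (x + z) (x + y + z)} =
      (fun p : Word 8 × Word 8 × Word 8 => tripleSum p.1 p.2.1 p.2.2) '' (C₈ ×ˢ B ×ˢ B) := by
    ext w
    constructor
    · rintro ⟨x, hx, y, hy, z, hz, rfl⟩
      exact ⟨(x, y, z), ⟨hx, hy, hz⟩, rfl⟩
    · rintro ⟨⟨x, y, z⟩, ⟨hx, hy, hz⟩, rfl⟩
      exact ⟨x, hx, y, hy, z, hz, rfl⟩
  have hcard : (C₈ ×ˢ B ×ˢ B).ncard = 2 ^ 18 := by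
    rw [Set.ncard_prod, Set.ncard_prod, hC.1, hB.1]
    norm_num
  rw [hD, ← hcard]
  refine isCode_image _ (by norm_num) ?_
  rintro ⟨x, y, z⟩ ⟨hx, hy, hz⟩ ⟨x', y', z'⟩ ⟨hx', hy', hz'⟩ hne
  exact min_le_hammingDist_tripleSum hC.2 hB.2 hx hy hz hx' hy' hz' hne
end

section
/- Let C be a subset of the even-weight words of F_2^24 that is a union of spheres, and suppose χ_C is a perfect 2-coloring of the even-weight component of HH(24) with parameters ((20+c, 256−c)(c, 276−c)). Then either c is divisible by 3, or c ≥ 25. -/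
/-- A sphere: the set of the 24 even-weight words of `F_2^24` at Hamming distance 1
from some fixed odd-weight word (the center). -/
def IsSphere (S : Set (Word 24)) : Prop :=
  ∃ z : Word 24, Odd (hammingDist z 0) ∧ S = {w | hammingDist z w = 1}

/-- `C` is a union of spheres: every word of `C` belongs to some sphere entirely
contained in `C`. -/
def IsUnionOfSpheres (C : Set (Word 24)) : Prop :=
  ∀ v ∈ C, ∃ S : Set (Word 24), IsSphere S ∧ S ⊆ C ∧ v ∈ S


def flp {n : ℕ} (z : Word n) (i : Fin n) : Word n := Function.update z i (z i + 1)

lemma zmod2_ne_add_one : ∀ a b : ZMod 2, a ≠ b + 1 ↔ a = b := by decide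

lemma zmod2_add_one_ne : ∀ a : ZMod 2, a + 1 ≠ a := by decide

lemma hammingDist_def {n : ℕ} (x y : Word n) :
    hammingDist x y = (Finset.univ.filter fun i => x i ≠ y i).card := rfl

lemma dist_flp {n : ℕ} (v z : Word n) (i : Fin n) :
    hammingDist v (flp z i) =
      if v i = z i then hammingDist v z + 1 else hammingDist v z - 1 := by
  classical
  rw [hammingDist_def, hammingDist_def]
  have hset : (Finset.univ.filter fun j => v j ≠ flp z i j) =
      if v i = z i then insert i (Finset.univ.filter fun j => v j ≠ z j)
      else (Finset.univ.filter fun j => v j ≠ z j).erase i := by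
    split_ifs with h
    · ext j
      simp only [Finset.mem_filter, Finset.mem_univ, true_and, Finset.mem_insert]
      by_cases hj : j = i
      · subst hj
        simp [flp, Function.update_self, h, zmod2_ne_add_one]
      · simp [flp, Function.update_of_ne hj, hj]
    · ext j
      simp only [Finset.mem_filter, Finset.mem_univ, true_and, Finset.mem_erase]
      by_cases hj : j = i
      · subst hj
        simp [flp, Function.update_self, zmod2_ne_add_one, h]
      · simp [flp, Function.update_of_ne hj, hj]
  rw [hset]
  split_ifs with h
  · rw [Finset.card_insert_of_notMem (by simp [h])]
  · rw [Finset.card_erase_of_mem (by simp [h])]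

lemma dist_flp_self {n : ℕ} (z : Word n) (i : Fin n) : hammingDist z (flp z i) = 1 := by
  rw [dist_flp]; simp

lemma flp_inj {n : ℕ} (z : Word n) : Function.Injective (flp z) := by
  intro i j hij
  by_contra hne
  have := congrFun hij i
  rw [flp, flp, Function.update_self, Function.update_of_ne hne] at this
  exact zmod2_add_one_ne _ this

lemma eq_flp_of_dist_one {n : ℕ} {z u : Word n} (h : hammingDist z u = 1) :
    ∃ i, u = flp z i := by
  classical
  rw [hammingDist_def, Finset.card_eq_one] at h
  obtain ⟨i, hi⟩ := h
  refine ⟨i, funext fun j => ?_⟩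
  by_cases hj : j = i
  · subst hj
    have : z j ≠ u j := by
      have : j ∈ ({j} : Finset (Fin n)) := Finset.mem_singleton_self j
      rw [← hi] at this; simpa using this
    rw [flp, Function.update_self]
    rcases (by decide : ∀ a b : ZMod 2, a ≠ b → b = a + 1) _ _ this with h'
    exact h'.symm ▸ rfl
  · have : j ∉ (Finset.univ.filter fun k => z k ≠ u k) := by
      rw [hi]; simpa using hj
    simp only [Finset.mem_filter, Finset.mem_univ, true_and, not_not] at this
    rw [flp, Function.update_of_ne hj]
    exact this.symm

lemma even_flp {n : ℕ} {z : Word n} (hz : Odd (hammingDist z 0)) (i : Fin n) :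
    Even (hammingDist (flp z i) 0) := by
  rw [hammingDist_comm, dist_flp, hammingDist_comm (0 : Word n) z]
  rw [Nat.odd_iff] at hz
  rw [Nat.even_iff]
  split_ifs <;> omega

lemma dist_flp_flp {n : ℕ} (z : Word n) {i j : Fin n} (hij : i ≠ j) :
    hammingDist (flp z i) (flp z j) = 2 := by
  have hcond : flp z i j = z j := Function.update_of_ne (Ne.symm hij) _ z
  rw [dist_flp, if_pos hcond, hammingDist_comm, dist_flp_self]

lemma center_unique {z1 z2 : Word 24}
    (h : {u : Word 24 | hammingDist z1 u = 1} = {u | hammingDist z2 u = 1}) : z1 = z2 := by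
  classical
  by_contra hne
  have key : ∀ i, hammingDist z2 (flp z1 i) = 1 := by
    intro i
    have h1 : flp z1 i ∈ {u : Word 24 | hammingDist z1 u = 1} := dist_flp_self z1 i
    rw [h] at h1
    exact h1
  have hne' : ∀ i, z2 i ≠ z1 i := by
    intro i hi
    have hk := key i
    rw [dist_flp, if_pos hi] at hk
    have hd : hammingDist z2 z1 = 0 := by omega
    exact hne (eq_of_hammingDist_eq_zero hd).symm
  have h24 : hammingDist z2 z1 = 24 := by
    rw [hammingDist_def, Finset.filter_true_of_mem (fun i _ => hne' i)]
    simp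
  have hk := key 0
  rw [dist_flp, if_neg (hne' 0), h24] at hk
  omega

lemma ncard_setOf_eq (P : Word 24 → Prop) [DecidablePred P] :
    {w | P w}.ncard = (Finset.univ.filter P).card := by
  rw [show {w | P w} = ↑(Finset.univ.filter P) by ext; simp, Set.ncard_coe_finset]

/-- If `C` is a union of spheres and `χ_C` is a perfect 2-coloring of the even-weight
component of `HH(24)` with parameters `((20+c, 256−c)(c, 276−c))`, then either `3 ∣ c`
or `c ≥ 25`. -/
theorem union_of_spheres_divisibility (c : ℕ) (C : Set (Word 24))
    (hU : IsUnionOfSpheres C)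
    (h : IsPerfect2Coloring (evenWords 24) C (20 + c) (256 - c) c (276 - c)) :
    3 ∣ c ∨ 25 ≤ c := by
  classical
  obtain ⟨hsub, hCne, hVCne, hC, hVC⟩ := h
  by_cases HB : ∀ w ∈ C, ∀ S1 S2 : Set (Word 24), IsSphere S1 → IsSphere S2 →
      S1 ⊆ C → S2 ⊆ C → w ∈ S1 → w ∈ S2 → S1 = S2
  · -- Case B : every point of C lies in a unique sphere inside C ⇒ 3 ∣ c
    left
    choose S hSph hSsub hSmem using hU
    choose zc hzodd hzeq using hSph
    obtain ⟨v, hvV, hvC⟩ := hVCne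
    have hNc := (hVC v ⟨hvV, hvC⟩).1
    rw [ncard_setOf_eq] at hNc
    set Nset : Finset (Word 24) :=
      Finset.univ.filter (fun w => w ∈ evenWords 24 ∧ hammingDist v w = 2 ∧ w ∈ C) with hNdef
    set f : Word 24 → Word 24 := fun w => if hw : w ∈ C then zc w hw else v with hfdef
    have hmapsto : ∀ w ∈ Nset, f w ∈ Nset.image f := fun w hw => Finset.mem_image_of_mem f hw
    have hcardsum := Finset.card_eq_sum_card_fiberwise hmapsto
    have hfiber : ∀ b ∈ Nset.image f, (Nset.filter (fun w => f w = b)).card = 3 := by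
      intro b hb
      obtain ⟨w0, hw0N, hfw0⟩ := Finset.mem_image.mp hb
      obtain ⟨-, hw0V, hw0d, hw0C⟩ := Finset.mem_filter.mp hw0N
      have hfw0' : zc w0 hw0C = b := by rw [← hfw0]; simp [hfdef, hw0C]
      set z0 := zc w0 hw0C with hz0
      -- the sphere around z0 is inside C
      have hsphC : ∀ u : Word 24, hammingDist z0 u = 1 → u ∈ C := by
        intro u hu
        apply hSsub w0 hw0C
        rw [hzeq w0 hw0C]
        exact hu
      have hdz0w0 : hammingDist z0 w0 = 1 := by
        have := hSmem w0 hw0C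
        rw [hzeq w0 hw0C] at this
        exact this
      -- distance from v to z0 is 3
      have hd3 : hammingDist v z0 = 3 := by
        obtain ⟨i0, hi0⟩ := eq_flp_of_dist_one hdz0w0
        have := hw0d
        rw [hi0, dist_flp] at this
        have h13 : hammingDist v z0 = 1 ∨ hammingDist v z0 = 3 := by
          split_ifs at this <;> omega
        rcases h13 with h1 | h3
        · exact absurd (hsphC v (by rwa [hammingDist_comm])) hvC
        · exact h3
      -- the fiber is the triangle
      have hfib_eq : Nset.filter (fun w => f w = b) =
          Finset.image (flp z0) (Finset.univ.filter fun i => v i ≠ z0 i) := by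
        ext u
        simp only [hNdef, Finset.mem_filter, Finset.mem_univ, true_and, Finset.mem_image]
        constructor
        · rintro ⟨⟨huV, hud, huC⟩, hfu⟩
          have hfu' : zc u huC = b := by rw [← hfu]; simp [hfdef, huC]
          have hdz0u : hammingDist z0 u = 1 := by
            have := hSmem u huC
            rw [hzeq u huC, hfu', ← hfw0'] at this
            exact this
          obtain ⟨i, hi⟩ := eq_flp_of_dist_one hdz0u
          refine ⟨i, ?_, hi.symm⟩
          intro hvi
          rw [hi, dist_flp, if_pos hvi, hd3] at hud
          omega
        · rintro ⟨i, hvi, rfl⟩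
          have hu1 : hammingDist z0 (flp z0 i) = 1 := dist_flp_self z0 i
          have huC : flp z0 i ∈ C := hsphC _ hu1
          have hud : hammingDist v (flp z0 i) = 2 := by
            rw [dist_flp, if_neg hvi, hd3]
          have huV : flp z0 i ∈ evenWords 24 := even_flp (hzodd w0 hw0C) i
          refine ⟨⟨huV, hud, huC⟩, ?_⟩
          -- f (flp z0 i) = b : uniqueness of spheres
          have hSeq : S (flp z0 i) huC = S w0 hw0C := by
            apply HB (flp z0 i) huC _ _ ⟨zc _ huC, hzodd _ huC, hzeq _ huC⟩
              ⟨z0, hzodd w0 hw0C, hzeq w0 hw0C⟩ (hSsub _ huC) (hSsub w0 hw0C)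
              (hSmem _ huC)
            rw [hzeq w0 hw0C]
            exact hu1
          have hceq : zc (flp z0 i) huC = z0 := by
            apply center_unique
            rw [← hzeq _ huC, hSeq, hzeq w0 hw0C]
          show f (flp z0 i) = b
          rw [hfdef]
          simp only [dif_pos huC]
          rw [hceq, hfw0']
      rw [hfib_eq, Finset.card_image_of_injective _ (flp_inj z0)]
      rw [show (Finset.univ.filter fun i => v i ≠ z0 i).card = hammingDist v z0 from rfl, hd3]
    rw [hcardsum, Finset.sum_congr rfl hfiber, Finset.sum_const, smul_eq_mul] at hNc
    exact ⟨(Nset.image f).card, by omega⟩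
  · -- Case A : two distinct spheres through a common point ⇒ c ≥ 25
    right
    push_neg at HB
    obtain ⟨w, hwC, S1, S2, hS1, hS2, hS1C, hS2C, hwS1, hwS2, hSne⟩ := HB
    obtain ⟨z1, hz1odd, rfl⟩ := hS1
    obtain ⟨z2, hz2odd, rfl⟩ := hS2
    have hzne : z1 ≠ z2 := fun hz => hSne (by rw [hz])
    set F1 : Finset (Word 24) := Finset.image (flp z1) Finset.univ with hF1def
    set F2 : Finset (Word 24) := Finset.image (flp z2) Finset.univ with hF2def
    have hmem1 : ∀ u : Word 24, u ∈ F1 ↔ hammingDist z1 u = 1 := by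
      intro u
      constructor
      · rintro hu
        obtain ⟨i, -, rfl⟩ := Finset.mem_image.mp hu
        exact dist_flp_self z1 i
      · intro hu
        obtain ⟨i, rfl⟩ := eq_flp_of_dist_one hu
        exact Finset.mem_image_of_mem _ (Finset.mem_univ i)
    have hmem2 : ∀ u : Word 24, u ∈ F2 ↔ hammingDist z2 u = 1 := by
      intro u
      constructor
      · rintro hu
        obtain ⟨i, -, rfl⟩ := Finset.mem_image.mp hu
        exact dist_flp_self z2 i
      · intro hu
        obtain ⟨i, rfl⟩ := eq_flp_of_dist_one hu
        exact Finset.mem_image_of_mem _ (Finset.mem_univ i)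
    have hwF1 : w ∈ F1 := (hmem1 w).mpr hwS1
    have hwF2 : w ∈ F2 := (hmem2 w).mpr hwS2
    have hcard1 : F1.card = 24 := by
      rw [hF1def, Finset.card_image_of_injective _ (flp_inj z1)]; simp
    have hcard2 : F2.card = 24 := by
      rw [hF2def, Finset.card_image_of_injective _ (flp_inj z2)]; simp
    -- distance between centers is 2
    have hd12 : hammingDist z2 z1 = 2 := by
      obtain ⟨iw, hiw⟩ := eq_flp_of_dist_one hwS1
      have h2 : hammingDist z2 w = 1 := hwS2
      rw [hiw, dist_flp] at h2
      have hne0 : hammingDist z2 z1 ≠ 0 := fun h0 =>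
        hzne (eq_of_hammingDist_eq_zero h0).symm
      split_ifs at h2 <;> omega
    -- intersection bound
    have hint : F2 ∩ F1 ⊆ Finset.image (flp z1) (Finset.univ.filter fun i => z2 i ≠ z1 i) := by
      intro u hu
      have hu1 : u ∈ F1 := (Finset.mem_inter.mp hu).2
      have hu2 : hammingDist z2 u = 1 := (hmem2 u).mp (Finset.mem_inter.mp hu).1
      obtain ⟨i, -, rfl⟩ := Finset.mem_image.mp hu1
      apply Finset.mem_image_of_mem
      simp only [Finset.mem_filter, Finset.mem_univ, true_and]
      intro hzi
      rw [dist_flp, if_pos hzi, hd12] at hu2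
      omega
    have hintcard : (F2 ∩ F1).card ≤ 2 := by
      calc (F2 ∩ F1).card ≤ _ := Finset.card_le_card hint
        _ ≤ (Finset.univ.filter fun i => z2 i ≠ z1 i).card := Finset.card_image_le
        _ = 2 := hd12
    have hsdiff : 22 ≤ (F2 \ F1).card := by
      have := Finset.card_inter_add_card_sdiff F2 F1
      omega
    -- the big neighbor set
    set G : Finset (Word 24) :=
      Finset.univ.filter (fun x => x ∈ evenWords 24 ∧ hammingDist w x = 2 ∧ x ∈ C) with hGdef
    have hsubG : (F1.erase w) ∪ (F2 \ F1) ⊆ G := by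
      intro x hx
      simp only [Finset.mem_union, Finset.mem_erase, Finset.mem_sdiff] at hx
      simp only [hGdef, Finset.mem_filter, Finset.mem_univ, true_and]
      rcases hx with ⟨hxw, hxF1⟩ | ⟨hxF2, hxF1⟩
      · obtain ⟨i, -, rfl⟩ := Finset.mem_image.mp hxF1
        obtain ⟨iw, hiw⟩ := eq_flp_of_dist_one hwS1
        have hine : iw ≠ i := fun he => hxw (by rw [hiw, he])
        refine ⟨even_flp hz1odd i, ?_, hS1C (dist_flp_self z1 i)⟩
        rw [hiw]
        exact dist_flp_flp z1 hine
      · obtain ⟨i, -, rfl⟩ := Finset.mem_image.mp hxF2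
        obtain ⟨iw, hiw⟩ := eq_flp_of_dist_one hwS2
        have hine : iw ≠ i := fun he => hxF1 (by rw [← he, ← hiw]; exact hwF1)
        refine ⟨even_flp hz2odd i, ?_, hS2C (dist_flp_self z2 i)⟩
        rw [hiw]
        exact dist_flp_flp z2 hine
    have hdisj : Disjoint (F1.erase w) (F2 \ F1) := by
      rw [Finset.disjoint_left]
      intro x hx1 hx2
      exact (Finset.mem_sdiff.mp hx2).2 (Finset.mem_of_mem_erase hx1)
    have hGcard : 45 ≤ G.card := by
      have h1 : ((F1.erase w) ∪ (F2 \ F1)).card = (F1.erase w).card + (F2 \ F1).card :=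
        Finset.card_union_of_disjoint hdisj
      have h2 : (F1.erase w).card = 23 := by rw [Finset.card_erase_of_mem hwF1, hcard1]
      have := Finset.card_le_card hsubG
      omega
    have hwcount := (hC w hwC).1
    rw [ncard_setOf_eq] at hwcount
    rw [← hGdef] at hwcount
    omega
end
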